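/- arXiv:1912.06368 — 10 statements merged into one kernel-verified Lean document; each statement's English description precedes it below -/
import Mathlib

section
/- Let 𝔹 = (B, E, E^∨) be a DK-triple and b ∈ B. Then there is a unique bijection (−)^∨ : π₀E(b) → π₀E^∨(b) such that for every Epi e with domain b and every representative e^∨ of the class (−)^∨([e]), the composite e ∘ e^∨ is an isomorphism in B. -/
open CategoryTheory CategoryTheory.Limits

universe v u v' u'

namespace DK

variable {B : Type u} [Category.{v} B]

/-- The singular arrows `Sing := E^∨_≠ ∘ B`: arrows of the form
(non-invertible dual Epi) ∘ (arbitrary arrow). -/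
def Sing (Edual : MorphismProperty B) : MorphismProperty B :=
  fun X Y f => ∃ (Z : B) (g : X ⟶ Z) (h : Z ⟶ Y), Edual h ∧ ¬ IsIso h ∧ f = g ≫ h

/-- The regular arrows `Reg := B ∖ Sing`. -/
def Regular (Edual : MorphismProperty B) : MorphismProperty B :=
  fun _ _ f => ¬ Sing Edual f

/-- The Monos `M := B ∖ (B ∘ E_≠)`: arrows which are not of the form
(arbitrary arrow) ∘ (non-invertible Epi). -/
def Mon (E : MorphismProperty B) : MorphismProperty B :=
  fun X Y f => ¬ ∃ (Z : B) (e : X ⟶ Z) (g : Z ⟶ Y), E e ∧ ¬ IsIso e ∧ f = e ≫ g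

/-- Two arrows out of `b` are isomorphic as objects of the category `E(b)` of
(Epis) under `b`. -/
def EpiEquiv {b c c' : B} (e : b ⟶ c) (e' : b ⟶ c') : Prop :=
  ∃ u : c ≅ c', e ≫ u.hom = e'

/-- Two arrows into `b` are isomorphic as objects of the category `E^∨(b)` of
(dual Epis) over `b`. -/
def DualEquiv {b c c' : B} (d : c ⟶ b) (d' : c' ⟶ b) : Prop :=
  ∃ u : c ≅ c', u.hom ≫ d' = d

/-- A (T1)-factorization of the arrow `f` as `e^∨ ∘ f̄ ∘ e` with `e ∈ E`,
`f̄ ∈ M ∩ Reg` and `e^∨ ∈ E^∨`. -/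
structure Fact (E Edual : MorphismProperty B) {X Y : B} (f : X ⟶ Y) where
  Z : B
  W : B
  e : X ⟶ Z
  m : Z ⟶ W
  d : W ⟶ Y
  he : E e
  hm : Mon E m ∧ Regular Edual m
  hd : Edual d
  fac : e ≫ m ≫ d = f

/-- Axiom (T2) at the object `b`: there are finitely many Epis out of `b` and
dual Epis into `b` up to isomorphism, and they can be enumerated by `Fin n`
(`n ≥ 1`) in such a way that the pairing matrix `⟨e_i ; e^∨_j⟩ = e_i ∘ e^∨_j`
has isomorphisms on the diagonal and non-isomorphisms below the diagonal. -/
def TriangularAt (E Edual : MorphismProperty B) (b : B) : Prop :=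
  ∃ n : ℕ, 0 < n ∧ ∃ (cE : Fin n → B) (eR : ∀ i, b ⟶ cE i)
      (cD : Fin n → B) (dR : ∀ i, cD i ⟶ b),
    (∀ i, E (eR i)) ∧ (∀ i, Edual (dR i)) ∧
    (∀ {c : B} (e : b ⟶ c), E e → ∃! i : Fin n, EpiEquiv e (eR i)) ∧
    (∀ {c : B} (d : c ⟶ b), Edual d → ∃! i : Fin n, DualEquiv d (dR i)) ∧
    (∀ i : Fin n, IsIso (dR i ≫ eR i)) ∧
    (∀ i j : Fin n, j < i → ¬ IsIso (dR j ≫ eR i))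

/-- The diagonalizable version of axiom (T2) at `b`: the pairing matrix has
isomorphisms on the diagonal and non-isomorphisms in all off-diagonal spots. -/
def DiagonalAt (E Edual : MorphismProperty B) (b : B) : Prop :=
  ∃ n : ℕ, 0 < n ∧ ∃ (cE : Fin n → B) (eR : ∀ i, b ⟶ cE i)
      (cD : Fin n → B) (dR : ∀ i, cD i ⟶ b),
    (∀ i, E (eR i)) ∧ (∀ i, Edual (dR i)) ∧
    (∀ {c : B} (e : b ⟶ c), E e → ∃! i : Fin n, EpiEquiv e (eR i)) ∧
    (∀ {c : B} (d : c ⟶ b), Edual d → ∃! i : Fin n, DualEquiv d (dR i)) ∧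
    (∀ i : Fin n, IsIso (dR i ≫ eR i)) ∧
    (∀ i j : Fin n, i ≠ j → ¬ IsIso (dR j ≫ eR i))

/-- A DK-triple `𝔹 = (B, E, E^∨)`: a category `B` with two wide subcategories
`E` (the Epis) and `E^∨` (the dual Epis), each containing all isomorphisms,
subject to the axioms (T1)–(T5). -/
structure DKTriple (B : Type u) [Category.{v} B] where
  /-- the Epis -/
  E : MorphismProperty B
  /-- the dual Epis -/
  Edual : MorphismProperty B
  E_iso : ∀ {X Y : B} (f : X ⟶ Y), IsIso f → E f
  Edual_iso : ∀ {X Y : B} (f : X ⟶ Y), IsIso f → Edual f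
  E_comp : ∀ {X Y Z : B} {f : X ⟶ Y} {g : Y ⟶ Z}, E f → E g → E (f ≫ g)
  Edual_comp : ∀ {X Y Z : B} {f : X ⟶ Y} {g : Y ⟶ Z}, Edual f → Edual g → Edual (f ≫ g)
  /-- (T1), existence part -/
  t1_exists : ∀ {X Y : B} (f : X ⟶ Y), Nonempty (Fact E Edual f)
  /-- (T1), uniqueness up to unique isomorphism -/
  t1_unique : ∀ {X Y : B} {f : X ⟶ Y} (F₁ F₂ : Fact E Edual f),
    ∃! p : (F₁.Z ≅ F₂.Z) × (F₁.W ≅ F₂.W),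
      F₁.e ≫ p.1.hom = F₂.e ∧ p.1.hom ≫ F₂.m = F₁.m ≫ p.2.hom ∧
        p.2.hom ≫ F₂.d = F₁.d
  /-- (T2) -/
  t2 : ∀ b : B, TriangularAt E Edual b
  /-- (T3): `E^∨ ∘ E` is closed under composition -/
  t3 : ∀ {X Y Z : B} {f : X ⟶ Y} {g : Y ⟶ Z},
    (∃ (W : B) (e : X ⟶ W) (d : W ⟶ Y), E e ∧ Edual d ∧ f = e ≫ d) →
    (∃ (W : B) (e : Y ⟶ W) (d : W ⟶ Z), E e ∧ Edual d ∧ g = e ≫ d) →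
    ∃ (W : B) (e : X ⟶ W) (d : W ⟶ Z), E e ∧ Edual d ∧ f ≫ g = e ≫ d
  /-- (T4): `(M ∩ Reg) ∘ (M ∩ Reg) ⊆ M` -/
  t4 : ∀ {X Y Z : B} {f : X ⟶ Y} {g : Y ⟶ Z},
    (Mon E f ∧ Regular Edual f) → (Mon E g ∧ Regular Edual g) → Mon E (f ≫ g)
  /-- (T5): `M ∘ Sing ⊆ Sing` -/
  t5 : ∀ {X Y Z : B} {f : X ⟶ Y} {g : Y ⟶ Z},
    Sing Edual f → Mon E g → Sing Edual (f ≫ g)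

/-- A DK-triple is *reduced* if `B = E^∨ ∘ E`. -/
def DKTriple.Reduced (T : DKTriple B) : Prop :=
  ∀ {X Y : B} (f : X ⟶ Y),
    ∃ (W : B) (e : X ⟶ W) (d : W ⟶ Y), T.E e ∧ T.Edual d ∧ f = e ≫ d

end DK

namespace DK

variable {B : Type u} [Category.{v} B]

/-- The Epis out of `b`, i.e. the objects of the category `E(b)`. -/
def EpiOut (T : DKTriple B) (b : B) := Σ c : B, {e : b ⟶ c // T.E e}

/-- The dual Epis into `b`, i.e. the objects of the category `E^∨(b)`. -/
def DualIn (T : DKTriple B) (b : B) := Σ c : B, {d : c ⟶ b // T.Edual d}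

/-- Isomorphism in `E(b)`; the quotient `Quot (epiRel T b)` is `π₀E(b)`. -/
def epiRel (T : DKTriple B) (b : B) : EpiOut T b → EpiOut T b → Prop :=
  fun x y => EpiEquiv x.2.1 y.2.1

/-- Isomorphism in `E^∨(b)`; the quotient `Quot (dualRel T b)` is `π₀E^∨(b)`. -/
def dualRel (T : DKTriple B) (b : B) : DualIn T b → DualIn T b → Prop :=
  fun x y => DualEquiv x.2.1 y.2.1

section Aux

lemma epiEquiv_refl {b c : B} (e : b ⟶ c) : EpiEquiv e e := ⟨Iso.refl _, by simp⟩

lemma epiEquiv_symm {b c c' : B} {e : b ⟶ c} {e' : b ⟶ c'} (h : EpiEquiv e e') :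
    EpiEquiv e' e := by
  obtain ⟨u, hu⟩ := h
  exact ⟨u.symm, by rw [← hu]; simp⟩

lemma epiEquiv_trans {b c c' c'' : B} {e : b ⟶ c} {e' : b ⟶ c'} {e'' : b ⟶ c''}
    (h : EpiEquiv e e') (h' : EpiEquiv e' e'') : EpiEquiv e e'' := by
  obtain ⟨u, hu⟩ := h; obtain ⟨v, hv⟩ := h'
  exact ⟨u ≪≫ v, by simp [← hv, ← hu]⟩

lemma dualEquiv_refl {b c : B} (d : c ⟶ b) : DualEquiv d d := ⟨Iso.refl _, by simp⟩

lemma dualEquiv_symm {b c c' : B} {d : c ⟶ b} {d' : c' ⟶ b} (h : DualEquiv d d') :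
    DualEquiv d' d := by
  obtain ⟨u, hu⟩ := h
  exact ⟨u.symm, by rw [← hu]; simp⟩

lemma dualEquiv_trans {b c c' c'' : B} {d : c ⟶ b} {d' : c' ⟶ b} {d'' : c'' ⟶ b}
    (h : DualEquiv d d') (h' : DualEquiv d' d'') : DualEquiv d d'' := by
  obtain ⟨u, hu⟩ := h; obtain ⟨v, hv⟩ := h'
  exact ⟨u ≪≫ v, by simp [← hu, ← hv]⟩

lemma epiRel_equivalence (T : DKTriple B) (b : B) : Equivalence (epiRel T b) :=
  ⟨fun x => epiEquiv_refl x.2.1, epiEquiv_symm, epiEquiv_trans⟩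

lemma dualRel_equivalence (T : DKTriple B) (b : B) : Equivalence (dualRel T b) :=
  ⟨fun x => dualEquiv_refl x.2.1, dualEquiv_symm, dualEquiv_trans⟩

lemma epiRel_exact {T : DKTriple B} {b : B} {x y : EpiOut T b}
    (h : Quot.mk (epiRel T b) x = Quot.mk (epiRel T b) y) : epiRel T b x y :=
  ((epiRel_equivalence T b).eqvGen_iff).mp (Quot.eqvGen_exact h)

lemma dualRel_exact {T : DKTriple B} {b : B} {x y : DualIn T b}
    (h : Quot.mk (dualRel T b) x = Quot.mk (dualRel T b) y) : dualRel T b x y :=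
  ((dualRel_equivalence T b).eqvGen_iff).mp (Quot.eqvGen_exact h)

lemma fin_eq_id_of_le {n : ℕ} (f : Fin n → Fin n) (hinj : Function.Injective f)
    (h : ∀ i, i ≤ f i) : ∀ i, f i = i := by
  have key : ∀ m : ℕ, ∀ i : Fin n, n - (i : ℕ) ≤ m → f i = i := by
    intro m
    induction m with
    | zero => intro i hi; exact absurd hi (by have := i.isLt; omega)
    | succ m ih =>
      intro i hi
      rcases lt_or_eq_of_le (h i) with hlt | heq
      · have hc : (i : ℕ) < (f i : ℕ) := hlt
        have h2 : f (f i) = f i := ih (f i) (by omega)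
        exact hinj h2
      · exact heq.symm
  intro i
  exact key n i (by omega)

end Aux

/-- For each object `b` of a DK-triple there is a unique bijection
`(-)^∨ : π₀E(b) → π₀E^∨(b)` such that `e ∘ e^∨` is invertible for every
Epi `e` out of `b` and every representative `e^∨` of the class `(-)^∨[e]`. -/
theorem exists_unique_bijection_pi0E_pi0Edual (T : DKTriple B) (b : B) :
    ∃! φ : Quot (epiRel T b) → Quot (dualRel T b),
      Function.Bijective φ ∧
      ∀ (x : EpiOut T b) (y : DualIn T b),
        φ (Quot.mk _ x) = Quot.mk _ y → IsIso (y.2.1 ≫ x.2.1) := by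
  obtain ⟨n, hn, cE, eR, cD, dR, hE, hD, clE, clD, hdiag, hlow⟩ := T.t2 b
  -- packaging of the representatives
  set packE : Fin n → EpiOut T b := fun i => ⟨cE i, eR i, hE i⟩ with hpackE
  set packD : Fin n → DualIn T b := fun i => ⟨cD i, dR i, hD i⟩ with hpackD
  -- index functions
  have idxE : ∀ x : EpiOut T b,
      {i : Fin n // EpiEquiv x.2.1 (eR i) ∧ ∀ j, EpiEquiv x.2.1 (eR j) → j = i} := by
    intro x
    exact ⟨(clE x.2.1 x.2.2).choose, (clE x.2.1 x.2.2).choose_spec.1,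
      fun j hj => (clE x.2.1 x.2.2).choose_spec.2 j hj⟩
  have idxD : ∀ y : DualIn T b,
      {i : Fin n // DualEquiv y.2.1 (dR i) ∧ ∀ j, DualEquiv y.2.1 (dR j) → j = i} := by
    intro y
    exact ⟨(clD y.2.1 y.2.2).choose, (clD y.2.1 y.2.2).choose_spec.1,
      fun j hj => (clD y.2.1 y.2.2).choose_spec.2 j hj⟩
  have idxE_packE : ∀ i : Fin n, (idxE (packE i)).1 = i := by
    intro i
    exact ((idxE (packE i)).2.2 i (epiEquiv_refl _)).symm
  have idxD_packD : ∀ i : Fin n, (idxD (packD i)).1 = i := by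
    intro i
    exact ((idxD (packD i)).2.2 i (dualEquiv_refl _)).symm
  have hqEx : ∀ x : EpiOut T b,
      Quot.mk (epiRel T b) x = Quot.mk (epiRel T b) (packE (idxE x).1) :=
    fun x => Quot.sound (idxE x).2.1
  have hqDy : ∀ y : DualIn T b,
      Quot.mk (dualRel T b) y = Quot.mk (dualRel T b) (packD (idxD y).1) :=
    fun y => Quot.sound (idxD y).2.1
  -- injectivity of the representing family on classes
  have qE_inj : Function.Injective (fun i : Fin n => Quot.mk (epiRel T b) (packE i)) := by
    intro i j hij
    have h := epiRel_exact hij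
    have h1 : i = (idxE (packE i)).1 := (idxE_packE i).symm
    have h2 : j = (idxE (packE i)).1 := (idxE (packE i)).2.2 j h
    rw [h1, h2]
  have qD_inj : Function.Injective (fun i : Fin n => Quot.mk (dualRel T b) (packD i)) := by
    intro i j hij
    have h := dualRel_exact hij
    have h1 : i = (idxD (packD i)).1 := (idxD_packD i).symm
    have h2 : j = (idxD (packD i)).1 := (idxD (packD i)).2.2 j h
    rw [h1, h2]
  have qD_bij : Function.Bijective (fun i : Fin n => Quot.mk (dualRel T b) (packD i)) := by
    refine ⟨qD_inj, ?_⟩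
    intro q
    obtain ⟨y, rfl⟩ := Quot.exists_rep q
    exact ⟨(idxD y).1, (hqDy y).symm⟩
  -- the bijection φ
  set φ : Quot (epiRel T b) → Quot (dualRel T b) :=
    Quot.lift (fun x => Quot.mk (dualRel T b) (packD (idxE x).1))
      (by
        intro x y hxy
        have h1 : (idxE x).1 = (idxE y).1 :=
          (idxE y).2.2 (idxE x).1 (epiEquiv_trans (epiEquiv_symm hxy) (idxE x).2.1)
        rw [h1]) with hφ
  have φ_mk : ∀ x : EpiOut T b,
      φ (Quot.mk (epiRel T b) x) = Quot.mk (dualRel T b) (packD (idxE x).1) := fun x => rfl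
  -- inverse of φ
  set ψ : Quot (dualRel T b) → Quot (epiRel T b) :=
    Quot.lift (fun y => Quot.mk (epiRel T b) (packE (idxD y).1))
      (by
        intro x y hxy
        have h1 : (idxD x).1 = (idxD y).1 :=
          (idxD y).2.2 (idxD x).1 (dualEquiv_trans (dualEquiv_symm hxy) (idxD x).2.1)
        rw [h1]) with hψ
  have ψ_mk : ∀ y : DualIn T b,
      ψ (Quot.mk (dualRel T b) y) = Quot.mk (epiRel T b) (packE (idxD y).1) := fun y => rfl
  have φ_bij : Function.Bijective φ := by
    rw [Function.bijective_iff_has_inverse]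
    refine ⟨ψ, ?_, ?_⟩
    · intro q
      obtain ⟨x, rfl⟩ := Quot.exists_rep q
      rw [φ_mk, ψ_mk, idxD_packD, ← hqEx]
    · intro q
      obtain ⟨y, rfl⟩ := Quot.exists_rep q
      rw [ψ_mk, φ_mk, idxE_packE, ← hqDy]
  refine ⟨φ, ⟨φ_bij, ?_⟩, ?_⟩
  · -- the isomorphism property
    intro x y hxy
    rw [φ_mk] at hxy
    have hd : DualEquiv (dR (idxE x).1) y.2.1 := dualRel_exact hxy
    obtain ⟨v, hv⟩ := hd
    obtain ⟨u, hu⟩ := (idxE x).2.1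
    haveI := hdiag (idxE x).1
    have hcomp : y.2.1 ≫ x.2.1 = v.inv ≫ (dR (idxE x).1 ≫ eR (idxE x).1) ≫ u.inv := by
      rw [← hu, ← hv]
      simp
    rw [hcomp]
    infer_instance
  · -- uniqueness
    rintro χ ⟨χ_bij, χ_prop⟩
    -- the permutation induced by χ
    have σspec : ∀ i : Fin n,
        {j : Fin n // χ (Quot.mk (epiRel T b) (packE i)) = Quot.mk (dualRel T b) (packD j)} := by
      intro i
      have h := qD_bij.2 (χ (Quot.mk (epiRel T b) (packE i)))
      exact ⟨h.choose, h.choose_spec.symm⟩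
    set σ : Fin n → Fin n := fun i => (σspec i).1 with hσ
    have hχσ : ∀ i : Fin n,
        χ (Quot.mk (epiRel T b) (packE i)) = Quot.mk (dualRel T b) (packD (σ i)) :=
      fun i => (σspec i).2
    have σ_inj : Function.Injective σ := by
      intro i j hij
      apply qE_inj
      apply χ_bij.1
      show χ (Quot.mk (epiRel T b) (packE i)) = χ (Quot.mk (epiRel T b) (packE j))
      rw [hχσ i, hχσ j, hij]
    have σ_le : ∀ i, i ≤ σ i := by
      intro i
      by_contra hcon
      push_neg at hcon
      have hiso : IsIso ((packD (σ i)).2.1 ≫ (packE i).2.1) :=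
        χ_prop (packE i) (packD (σ i)) (hχσ i)
      exact hlow i (σ i) hcon hiso
    have σ_id : ∀ i, σ i = i := fin_eq_id_of_le σ σ_inj σ_le
    funext q
    obtain ⟨x, rfl⟩ := Quot.exists_rep q
    rw [hqEx x, hχσ (idxE x).1, σ_id, φ_mk, idxE_packE]


end DK
end

section
/- Let 𝔹 = (B, E, E^∨) be a DK-triple. Then every Epi (arrow of E) is a split epimorphism in B, and every dual Epi (arrow of E^∨) is a split monomorphism in B. -/
open CategoryTheory CategoryTheory.Limits

universe v u v' u'

namespace DK

/-- In a DK-triple, every Epi is a split epimorphism and every dual Epi is a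
split monomorphism in `B`. -/
theorem epi_isSplitEpi_and_dualEpi_isSplitMono {B : Type u} [Category.{v} B]
    (T : DKTriple B) :
    (∀ {X Y : B} (f : X ⟶ Y), T.E f → IsSplitEpi f) ∧
    (∀ {X Y : B} (f : X ⟶ Y), T.Edual f → IsSplitMono f) := by
  constructor
  · intro X Y f hf
    obtain ⟨n, hn, cE, eR, cD, dR, hE, hD, huE, huD, hdiag, -⟩ := T.t2 X
    obtain ⟨i, ⟨u, hu⟩, -⟩ := huE f hf
    haveI := hdiag i
    refine ⟨⟨u.hom ≫ inv (dR i ≫ eR i) ≫ dR i, ?_⟩⟩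
    have h1 : dR i ≫ f = (dR i ≫ eR i) ≫ u.inv := by
      rw [← hu]; simp
    rw [Category.assoc, Category.assoc, h1, IsIso.inv_hom_id_assoc]
    simp
  · intro X Y f hf
    obtain ⟨n, hn, cE, eR, cD, dR, hE, hD, huE, huD, hdiag, -⟩ := T.t2 Y
    obtain ⟨i, ⟨u, hu⟩, -⟩ := huD f hf
    haveI := hdiag i
    refine ⟨⟨eR i ≫ inv (dR i ≫ eR i) ≫ u.inv, ?_⟩⟩
    have h1 : f ≫ eR i = u.hom ≫ (dR i ≫ eR i) := by
      rw [← hu]; simp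
    rw [← Category.assoc, h1]
    simp

end DK
end

section
/- Let 𝔹 = (B, E, E^∨) be a DK-triple and b ∈ B. Then the categories E(b) and E^∨(b) are thin, i.e. between any two objects of E(b) (resp. of E^∨(b)) there is at most one morphism; in particular each of them is equivalent to a poset. -/
open CategoryTheory CategoryTheory.Limits

universe v u v' u'

namespace DK

/-- In a DK-triple, the categories `E(b)` of Epis under `b` and `E^∨(b)` of dual
Epis over `b` are thin: between any two objects there is at most one morphism
(hence each is equivalent to a poset). -/
theorem epiCat_and_dualEpiCat_thin {B : Type u} [Category.{v} B]
    (T : DKTriple B) (b : B) :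
    (∀ {c c' : B} (e : b ⟶ c) (e' : b ⟶ c'), T.E e → T.E e' →
      ∀ (u u' : c ⟶ c'), T.E u → T.E u' → e ≫ u = e' → e ≫ u' = e' → u = u') ∧
    (∀ {c c' : B} (d : c ⟶ b) (d' : c' ⟶ b), T.Edual d → T.Edual d' →
      ∀ (u u' : c ⟶ c'), T.Edual u → T.Edual u' → u ≫ d' = d → u' ≫ d' = d →
        u = u') := by
  obtain ⟨n, hn, cE, eR, cD, dR, hE, hD, uniqE, uniqD, diagIso, _⟩ := T.t2 b
  constructor
  · intro c c' e e' he _ u u' _ _ hu hu'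
    obtain ⟨i, ⟨v, hv⟩, -⟩ := uniqE e he
    have hiso : IsIso (dR i ≫ eR i) := diagIso i
    have hsec : (v.hom ≫ inv (dR i ≫ eR i) ≫ dR i) ≫ e = 𝟙 c := by
      have : ((v.hom ≫ inv (dR i ≫ eR i) ≫ dR i) ≫ e) ≫ v.hom = 𝟙 c ≫ v.hom := by
        simp only [Category.assoc, hv, Category.id_comp]
        simp
      exact (cancel_mono v.hom).1 this
    calc u = ((v.hom ≫ inv (dR i ≫ eR i) ≫ dR i) ≫ e) ≫ u := by rw [hsec]; simp
      _ = ((v.hom ≫ inv (dR i ≫ eR i) ≫ dR i) ≫ e) ≫ u' := by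
          simp only [Category.assoc, hu, hu']
      _ = u' := by rw [hsec]; simp
  · intro c c' d d' _ hd' u u' _ _ hu hu'
    obtain ⟨j, ⟨v, hv⟩, -⟩ := uniqD d' hd'
    have hiso : IsIso (dR j ≫ eR j) := diagIso j
    have hret : d' ≫ (eR j ≫ inv (dR j ≫ eR j) ≫ v.inv) = 𝟙 c' := by
      rw [← hv, Category.assoc, ← Category.assoc (dR j), IsIso.hom_inv_id_assoc,
        v.hom_inv_id]
    calc u = u ≫ d' ≫ (eR j ≫ inv (dR j ≫ eR j) ≫ v.inv) := by rw [hret]; simp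
      _ = u' ≫ d' ≫ (eR j ≫ inv (dR j ≫ eR j) ≫ v.inv) := by
          rw [reassoc_of% hu, reassoc_of% hu']
      _ = u' := by rw [hret]; simp

end DK
end

section
/- Let 𝔹 = (B, E, E^∨) be a DK-triple and let f be an arrow of B with (T1)-decomposition f = e^∨ ∘ f̄ ∘ e, where e ∈ E, f̄ ∈ M ∩ Reg, e^∨ ∈ E^∨. Then f is regular (f ∈ Reg) if and only if the component e^∨ is invertible, and f is a Mono (f ∈ M) if and only if the component e is invertible. -/
open CategoryTheory CategoryTheory.Limits

universe v u v' u'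

namespace DK

/-- An arrow that is both split epi and split mono is an isomorphism. -/
lemma isIso_of_section_retraction {B : Type u} [Category.{v} B] {X Y : B}
    (d : X ⟶ Y) (s : Y ⟶ X) (r : Y ⟶ X)
    (hs : s ≫ d = 𝟙 Y) (hr : d ≫ r = 𝟙 X) : IsIso d := by
  have hsr : s = r := by
    calc s = s ≫ 𝟙 X := by simp
    _ = s ≫ d ≫ r := by rw [hr]
    _ = (s ≫ d) ≫ r := by simp
    _ = r := by rw [hs]; simp
  exact ⟨⟨s, by rw [hsr]; exact hr, hs⟩⟩

/-- If `h` is a dual Epi and `w ≫ h` is invertible for some arrow `w`,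
then `h` itself is invertible.  Uses axiom (T2). -/
lemma isIso_of_edual_of_precomp_isIso {B : Type u} [Category.{v} B] (T : DKTriple B)
    {A C D : B} (w : A ⟶ C) (h : C ⟶ D) (hd : T.Edual h) (hiso : IsIso (w ≫ h)) :
    IsIso h := by
  obtain ⟨n, hn, cE, eR, cD, dR, hE, hD, _, classD, diag, _⟩ := T.t2 D
  obtain ⟨i, ⟨v, hv⟩, _⟩ := classD h hd
  have hdiag : IsIso (dR i ≫ eR i) := diag i
  have hsplit : (inv (w ≫ h) ≫ w ≫ v.hom) ≫ dR i = 𝟙 D := by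
    rw [Category.assoc, Category.assoc, hv]
    exact IsIso.inv_hom_id (w ≫ h)
  have hmono : dR i ≫ (eR i ≫ inv (dR i ≫ eR i)) = 𝟙 (cD i) := by
    rw [← Category.assoc]
    exact IsIso.hom_inv_id (dR i ≫ eR i)
  have : IsIso (dR i) :=
    isIso_of_section_retraction (dR i) (inv (w ≫ h) ≫ w ≫ v.hom)
      (eR i ≫ inv (dR i ≫ eR i)) hsplit hmono
  rw [← hv]
  infer_instance

/-- If `e` is an Epi and `e ≫ g` is invertible for some arrow `g`,
then `e` itself is invertible.  Uses axiom (T2). -/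
lemma isIso_of_e_of_postcomp_isIso {B : Type u} [Category.{v} B] (T : DKTriple B)
    {A C D : B} (e : A ⟶ C) (g : C ⟶ D) (he : T.E e) (hiso : IsIso (e ≫ g)) :
    IsIso e := by
  obtain ⟨n, hn, cE, eR, cD, dR, hE, hD, classE, _, diag, _⟩ := T.t2 A
  obtain ⟨i, ⟨v, hv⟩, _⟩ := classE e he
  have hdiag : IsIso (dR i ≫ eR i) := diag i
  have hmono : eR i ≫ (v.inv ≫ g ≫ inv (e ≫ g)) = 𝟙 A := by
    rw [← hv]
    calc (e ≫ v.hom) ≫ v.inv ≫ g ≫ inv (e ≫ g)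
        = e ≫ (v.hom ≫ v.inv) ≫ g ≫ inv (e ≫ g) := by simp
    _ = e ≫ g ≫ inv (e ≫ g) := by simp
    _ = (e ≫ g) ≫ inv (e ≫ g) := by rw [Category.assoc]
    _ = 𝟙 A := IsIso.hom_inv_id (e ≫ g)
  have hsplit : (inv (dR i ≫ eR i) ≫ dR i) ≫ eR i = 𝟙 (cE i) := by
    rw [Category.assoc]
    exact IsIso.inv_hom_id (dR i ≫ eR i)
  have : IsIso (eR i) :=
    isIso_of_section_retraction (eR i) (inv (dR i ≫ eR i) ≫ dR i)
      (v.inv ≫ g ≫ inv (e ≫ g)) hsplit hmono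
  have he' : e = eR i ≫ v.inv := by rw [← hv]; simp
  rw [he']
  infer_instance

/-- Given a (T1)-factorization `f = e^∨ ∘ f̄ ∘ e` of an arrow `f` in a DK-triple,
`f` is regular if and only if the component `e^∨ ∈ E^∨` is invertible, and `f` is
a Mono if and only if the component `e ∈ E` is invertible. -/
theorem regular_iff_dual_component_isIso_and_mono_iff_epi_component_isIso
    {B : Type u} [Category.{v} B] (T : DKTriple B) {X Y : B} (f : X ⟶ Y)
    (F : Fact T.E T.Edual f) :
    (Regular T.Edual f ↔ IsIso F.d) ∧ (Mon T.E f ↔ IsIso F.e) := by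
  constructor
  · constructor
    · intro hreg
      by_contra hniso
      exact hreg ⟨F.W, F.e ≫ F.m, F.d, F.hd, hniso, ((Category.assoc _ _ _).trans F.fac).symm⟩
    · rintro hiso ⟨V, g, h, hh, hhn, hfgh⟩
      obtain ⟨G⟩ := T.t1_exists g
      let F' : Fact T.E T.Edual f :=
        { Z := G.Z, W := G.W, e := G.e, m := G.m, d := G.d ≫ h,
          he := G.he, hm := G.hm, hd := T.Edual_comp G.hd hh,
          fac := by
            calc G.e ≫ G.m ≫ G.d ≫ h = (G.e ≫ G.m ≫ G.d) ≫ h := by simp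
            _ = g ≫ h := by rw [G.fac]
            _ = f := hfgh.symm }
      obtain ⟨p, ⟨hp1, hp2, hp3⟩, _⟩ := T.t1_unique F' F
      have : IsIso (G.d ≫ h) := by
        have : G.d ≫ h = p.2.hom ≫ F.d := hp3.symm
        rw [this]; infer_instance
      exact hhn (isIso_of_edual_of_precomp_isIso T G.d h hh this)
  · constructor
    · intro hmon
      by_contra hniso
      exact hmon ⟨F.Z, F.e, F.m ≫ F.d, F.he, hniso, F.fac.symm⟩
    · rintro hiso ⟨V, e', g, he', hen, hfeg⟩
      obtain ⟨G⟩ := T.t1_exists g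
      let F' : Fact T.E T.Edual f :=
        { Z := G.Z, W := G.W, e := e' ≫ G.e, m := G.m, d := G.d,
          he := T.E_comp he' G.he, hm := G.hm, hd := G.hd,
          fac := by
            calc (e' ≫ G.e) ≫ G.m ≫ G.d = e' ≫ (G.e ≫ G.m ≫ G.d) := by simp
            _ = e' ≫ g := by rw [G.fac]
            _ = f := hfeg.symm }
      obtain ⟨p, ⟨hp1, hp2, hp3⟩, _⟩ := T.t1_unique F F'
      have : IsIso (e' ≫ G.e) := by
        have : e' ≫ G.e = F.e ≫ p.1.hom := hp1.symm
        rw [this]; infer_instance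
      exact hen (isIso_of_e_of_postcomp_isIso T e' G.e he' this)

end DK
end

section
/- Let 𝔹 = (B, E, E^∨) be a DK-triple. Then the set of arrows B̄ := E^∨ ∘ E is a wide subcategory of B (it is closed under composition by (T3) and contains all identities), and the datum 𝔹̄ := (B̄, E, E^∨) is again a DK-triple, which is moreover reduced. -/
/-!
By (T2) every Epi is a split epimorphism and every dual Epi a split monomorphism, so
isomorphisms are regular Monos, and by uniqueness in (T1) an arrow lies in `B̄ = E^∨ ∘ E`
exactly when the middle part of its (T1)-factorization is invertible. Hence `B̄` is closed
under cancelling an Epi on the left and a dual Epi on the right. This makes Monos, singular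
arrows, (T1)-factorizations and the classes `π₀E(b)`, `π₀E^∨(b)` the same whether computed in
`B̄` or in `B`, so every axiom passes from `𝔹` to `𝔹̄`; reducedness holds by construction.
-/

open CategoryTheory CategoryTheory.Limits

universe v u v' u'

namespace DK

variable {B : Type u} [Category.{v} B]

/-- The set of arrows `B̄ := E^∨ ∘ E`. -/
def Bbar (T : DKTriple B) : MorphismProperty B := fun X Y f =>
  ∃ (W : B) (e : X ⟶ W) (d : W ⟶ Y), T.E e ∧ T.Edual d ∧ f = e ≫ d

/-- `B̄` contains all identities and is closed under composition (by (T3)),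
i.e. it is a wide subcategory of `B`. -/
instance Bbar.isMultiplicative (T : DKTriple B) : (Bbar T).IsMultiplicative where
  id_mem X := ⟨X, 𝟙 X, 𝟙 X, T.E_iso _ inferInstance, T.Edual_iso _ inferInstance,
    (Category.id_comp _).symm⟩
  comp_mem _ _ hf hg := T.t3 hf hg

theorem _root_.CategoryTheory.WideSubcategory.isIso_iff_isIso_hom {C : Type u'}
    [Category.{v'} C] {P : MorphismProperty C} [P.IsMultiplicative]
    (hP : MorphismProperty.isomorphisms C ≤ P) {X Y : WideSubcategory P} (f : X ⟶ Y) :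
    IsIso f ↔ IsIso f.hom := by
  refine ⟨fun _ => inferInstanceAs (IsIso ((wideSubcategoryInclusion P).map f)), fun _ => ?_⟩
  exact ⟨⟨⟨inv f.hom, hP _ (inferInstanceAs (IsIso (inv f.hom)))⟩,
    by ext; simp, by ext; simp⟩⟩

namespace DKTriple

variable (T : DKTriple B)

theorem isSplitEpi_of_E {X Y : B} {e : X ⟶ Y} (he : T.E e) : IsSplitEpi e := by
  obtain ⟨n, -, cE, eR, cD, dR, -, -, hEu, -, hdiag, -⟩ := T.t2 X
  obtain ⟨i, ⟨u, hu⟩, -⟩ := hEu e he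
  obtain rfl : e = eR i ≫ u.inv := by simp [← hu]
  have := hdiag i
  exact IsSplitEpi.mk' ⟨u.hom ≫ inv (dR i ≫ eR i) ≫ dR i, by
    simp only [Category.assoc]
    rw [← Category.assoc (dR i), IsIso.inv_hom_id_assoc, Iso.hom_inv_id]⟩

theorem isSplitMono_of_Edual {X Y : B} {d : X ⟶ Y} (hd : T.Edual d) : IsSplitMono d := by
  obtain ⟨n, -, cE, eR, cD, dR, -, -, -, hDu, hdiag, -⟩ := T.t2 Y
  obtain ⟨j, ⟨u, rfl⟩, -⟩ := hDu d hd
  have := hdiag j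
  exact IsSplitMono.mk' ⟨eR j ≫ inv (dR j ≫ eR j) ≫ u.inv, by
    rw [Category.assoc, ← Category.assoc (dR j), IsIso.hom_inv_id_assoc, Iso.hom_inv_id]⟩

theorem mon_of_isIso {X Y : B} (f : X ⟶ Y) [IsIso f] : Mon T.E f := by
  rintro ⟨Z, e, g, he, hne, rfl⟩
  have := T.isSplitEpi_of_E he
  have : IsSplitMono e :=
    IsSplitMono.mk' ⟨g ≫ inv (e ≫ g), by rw [← Category.assoc, IsIso.hom_inv_id]⟩
  exact hne (isIso_of_epi_of_isSplitMono e)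

theorem regular_of_isIso {X Y : B} (f : X ⟶ Y) [IsIso f] : Regular T.Edual f := by
  rintro ⟨Z, g, d, hd, hnd, rfl⟩
  have := T.isSplitMono_of_Edual hd
  have : IsSplitEpi d := IsSplitEpi.mk' ⟨inv (g ≫ d) ≫ g, by simp⟩
  exact hnd (isIso_of_mono_of_isSplitEpi d)

def trivialFact {X W Y : B} {e : X ⟶ W} {d : W ⟶ Y} (he : T.E e) (hd : T.Edual d) :
    Fact T.E T.Edual (e ≫ d) :=
  ⟨W, W, e, 𝟙 W, d, he, ⟨T.mon_of_isIso _, T.regular_of_isIso _⟩, hd, by simp⟩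

end DKTriple

section Bbar

variable (T : DKTriple B)

theorem isomorphisms_le_bbar : MorphismProperty.isomorphisms B ≤ Bbar T := fun _ _ f hf =>
  ⟨_, f, 𝟙 _, T.E_iso f hf, T.Edual_iso _ inferInstance, (Category.comp_id f).symm⟩

variable {T}

theorem bbar_of_E {X Y : B} {f : X ⟶ Y} (hf : T.E f) : Bbar T f :=
  ⟨Y, f, 𝟙 Y, hf, T.Edual_iso _ inferInstance, (Category.comp_id _).symm⟩

theorem bbar_of_Edual {X Y : B} {f : X ⟶ Y} (hf : T.Edual f) : Bbar T f :=
  ⟨X, 𝟙 X, f, T.E_iso _ inferInstance, hf, (Category.id_comp _).symm⟩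

/-- By uniqueness in (T1), `F` is isomorphic to the factorization `e ≫ 𝟙 ≫ d` of `f = e ≫ d`. -/
theorem isIso_m_of_bbar {X Y : B} {f : X ⟶ Y} (hf : Bbar T f) (F : Fact T.E T.Edual f) :
    IsIso F.m := by
  obtain ⟨W, e, d, he, hd, rfl⟩ := hf
  obtain ⟨p, ⟨-, hp, -⟩, -⟩ := T.t1_unique F (T.trivialFact he hd)
  rw [(Iso.eq_comp_inv p.2 (g := F.m) (f := p.1.hom)).mpr
    (by simpa [DKTriple.trivialFact] using hp.symm)]
  exact (p.1 ≪≫ p.2.symm).isIso_hom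

theorem bbar_of_isIso_m {X Y : B} {f : X ⟶ Y} (F : Fact T.E T.Edual f) (hm : IsIso F.m) :
    Bbar T f :=
  ⟨F.W, F.e ≫ F.m, F.d, T.E_comp F.he (T.E_iso _ hm), F.hd, by simp [F.fac]⟩

theorem bbar_of_E_comp {X Y Z : B} {e : X ⟶ Y} {g : Y ⟶ Z} (he : T.E e)
    (h : Bbar T (e ≫ g)) : Bbar T g := by
  obtain ⟨F⟩ := T.t1_exists g
  refine bbar_of_isIso_m F (isIso_m_of_bbar h ⟨F.Z, F.W, e ≫ F.e, F.m, F.d,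
    T.E_comp he F.he, F.hm, F.hd, ?_⟩)
  simp [F.fac]

theorem bbar_of_comp_Edual {X Y Z : B} {g : X ⟶ Y} {d : Y ⟶ Z} (hd : T.Edual d)
    (h : Bbar T (g ≫ d)) : Bbar T g := by
  obtain ⟨F⟩ := T.t1_exists g
  refine bbar_of_isIso_m F (isIso_m_of_bbar h ⟨F.Z, F.W, F.e, F.m, F.d ≫ d,
    F.he, F.hm, T.Edual_comp F.hd hd, ?_⟩)
  simp [← F.fac]

end Bbar

section WideSubcategory

variable (T : DKTriple B)

def Ebar : MorphismProperty (WideSubcategory (Bbar T)) := fun _ _ f => T.E f.hom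

def Edbar : MorphismProperty (WideSubcategory (Bbar T)) := fun _ _ f => T.Edual f.hom

variable {T} {X Y : WideSubcategory (Bbar T)}

theorem isIso_iff_isIso_hom (f : X ⟶ Y) : IsIso f ↔ IsIso f.hom :=
  WideSubcategory.isIso_iff_isIso_hom (isomorphisms_le_bbar T) f

theorem mon_ebar_iff (f : X ⟶ Y) : Mon (Ebar T) f ↔ Mon T.E f.hom := by
  refine not_congr ⟨fun ⟨Z, e, g, he, hne, hfac⟩ => ?_, fun ⟨Z, e, g, he, hne, hfac⟩ => ?_⟩
  · refine ⟨Z.obj, e.hom, g.hom, he, by rwa [← isIso_iff_isIso_hom], ?_⟩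
    rw [hfac, WideSubcategory.comp_def]
  · have hg : Bbar T g := bbar_of_E_comp he (hfac ▸ f.property)
    refine ⟨⟨Z⟩, ⟨e, bbar_of_E he⟩, ⟨g, hg⟩, he, by rwa [isIso_iff_isIso_hom], ?_⟩
    exact WideSubcategory.hom_ext _ hfac

theorem sing_edbar_iff (f : X ⟶ Y) : Sing (Edbar T) f ↔ Sing T.Edual f.hom := by
  refine ⟨fun ⟨Z, g, d, hd, hnd, hfac⟩ => ?_, fun ⟨Z, g, d, hd, hnd, hfac⟩ => ?_⟩
  · refine ⟨Z.obj, g.hom, d.hom, hd, by rwa [← isIso_iff_isIso_hom], ?_⟩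
    rw [hfac, WideSubcategory.comp_def]
  · have hg : Bbar T g := bbar_of_comp_Edual hd (hfac ▸ f.property)
    refine ⟨⟨Z⟩, ⟨g, hg⟩, ⟨d, bbar_of_Edual hd⟩, hd, by rwa [isIso_iff_isIso_hom], ?_⟩
    exact WideSubcategory.hom_ext _ hfac

theorem regular_edbar_iff (f : X ⟶ Y) : Regular (Edbar T) f ↔ Regular T.Edual f.hom :=
  not_congr (sing_edbar_iff f)

def liftIso (u : X.obj ≅ Y.obj) : X ≅ Y :=
  WideSubcategory.isoMk u (isomorphisms_le_bbar T _ (.infer_property _))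
    (isomorphisms_le_bbar T _ (.infer_property _))

theorem epiEquiv_iff {c c' : WideSubcategory (Bbar T)} (e : X ⟶ c) (e' : X ⟶ c') :
    EpiEquiv e e' ↔ EpiEquiv e.hom e'.hom := by
  refine ⟨fun ⟨u, hu⟩ => ⟨(wideSubcategoryInclusion _).mapIso u, ?_⟩, fun ⟨u, hu⟩ => ?_⟩
  · simp [← hu]
  · exact ⟨liftIso u, WideSubcategory.hom_ext _ hu⟩

theorem dualEquiv_iff {c c' : WideSubcategory (Bbar T)} (d : c ⟶ Y) (d' : c' ⟶ Y) :
    DualEquiv d d' ↔ DualEquiv d.hom d'.hom := by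
  refine ⟨fun ⟨u, hu⟩ => ⟨(wideSubcategoryInclusion _).mapIso u, ?_⟩, fun ⟨u, hu⟩ => ?_⟩
  · simp [← hu]
  · exact ⟨liftIso u, WideSubcategory.hom_ext _ hu⟩

theorem exists_ebar_edbar_fac (f : X ⟶ Y) :
    ∃ (W : WideSubcategory (Bbar T)) (e : X ⟶ W) (d : W ⟶ Y),
      Ebar T e ∧ Edbar T d ∧ f = e ≫ d := by
  obtain ⟨W, e, d, he, hd, hfac⟩ := f.property
  exact ⟨⟨W⟩, ⟨e, bbar_of_E he⟩, ⟨d, bbar_of_Edual hd⟩, he, hd, WideSubcategory.hom_ext _ hfac⟩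

def Fact.toBase {f : X ⟶ Y} (F : Fact (Ebar T) (Edbar T) f) : Fact T.E T.Edual f.hom :=
  ⟨F.Z.obj, F.W.obj, F.e.hom, F.m.hom, F.d.hom, F.he,
    ⟨(mon_ebar_iff _).1 F.hm.1, (regular_edbar_iff _).1 F.hm.2⟩, F.hd,
    by simpa using congrArg InducedWideCategory.Hom.hom F.fac⟩

theorem nonempty_fact_bbar (f : X ⟶ Y) : Nonempty (Fact (Ebar T) (Edbar T) f) := by
  obtain ⟨W, e, d, he, hd, rfl⟩ := exists_ebar_edbar_fac f
  exact ⟨⟨W, W, e, 𝟙 W, d, he,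
    ⟨(mon_ebar_iff _).2 (T.mon_of_isIso (𝟙 W.obj)),
      (regular_edbar_iff _).2 (T.regular_of_isIso (𝟙 W.obj))⟩,
    hd, by simp⟩⟩

theorem existsUnique_iso_fact_bbar {f : X ⟶ Y} (F₁ F₂ : Fact (Ebar T) (Edbar T) f) :
    ∃! p : (F₁.Z ≅ F₂.Z) × (F₁.W ≅ F₂.W),
      F₁.e ≫ p.1.hom = F₂.e ∧ p.1.hom ≫ F₂.m = F₁.m ≫ p.2.hom ∧ p.2.hom ≫ F₂.d = F₁.d := by
  obtain ⟨p, ⟨h₁, h₂, h₃⟩, hp⟩ := T.t1_unique F₁.toBase F₂.toBase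
  refine ⟨(liftIso p.1, liftIso p.2), ⟨WideSubcategory.hom_ext _ h₁,
    WideSubcategory.hom_ext _ h₂, WideSubcategory.hom_ext _ h₃⟩, ?_⟩
  rintro q ⟨hq₁, hq₂, hq₃⟩
  let ι := wideSubcategoryInclusion (Bbar T)
  obtain rfl := hp (ι.mapIso q.1, ι.mapIso q.2) ⟨congrArg InducedWideCategory.Hom.hom hq₁,
    congrArg InducedWideCategory.Hom.hom hq₂, congrArg InducedWideCategory.Hom.hom hq₃⟩
  rfl

theorem triangularAt_bbar (b : WideSubcategory (Bbar T)) :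
    TriangularAt (Ebar T) (Edbar T) b := by
  obtain ⟨n, hn, cE, eR, cD, dR, hE, hD, hEu, hDu, hdiag, hlow⟩ := T.t2 b.obj
  refine ⟨n, hn, fun i => ⟨cE i⟩, fun i => ⟨eR i, bbar_of_E (hE i)⟩,
    fun i => ⟨cD i⟩, fun i => ⟨dR i, bbar_of_Edual (hD i)⟩, hE, hD,
    fun e he => ?_, fun d hd => ?_, fun i => ?_, fun i j hij => ?_⟩
  · simpa only [epiEquiv_iff] using hEu e.hom he
  · simpa only [dualEquiv_iff] using hDu d.hom hd
  · exact (isIso_iff_isIso_hom _).2 (hdiag i)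
  · exact mt (isIso_iff_isIso_hom _).1 (hlow i j hij)

end WideSubcategory

def bbarTriple (T : DKTriple B) : DKTriple (WideSubcategory (Bbar T)) where
  E := Ebar T
  Edual := Edbar T
  E_iso f hf := T.E_iso f.hom ((isIso_iff_isIso_hom f).1 hf)
  Edual_iso f hf := T.Edual_iso f.hom ((isIso_iff_isIso_hom f).1 hf)
  E_comp hf hg := T.E_comp hf hg
  Edual_comp hf hg := T.Edual_comp hf hg
  t1_exists := nonempty_fact_bbar
  t1_unique := existsUnique_iso_fact_bbar
  t2 := triangularAt_bbar
  t3 _ _ := exists_ebar_edbar_fac _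
  t4 hf hg := (mon_ebar_iff _).2 <| T.t4
    ⟨(mon_ebar_iff _).1 hf.1, (regular_edbar_iff _).1 hf.2⟩
    ⟨(mon_ebar_iff _).1 hg.1, (regular_edbar_iff _).1 hg.2⟩
  t5 hf hg := (sing_edbar_iff _).2 <| T.t5 ((sing_edbar_iff _).1 hf) ((mon_ebar_iff _).1 hg)

/-- The set of arrows `B̄ := E^∨ ∘ E` of a DK-triple `(B, E, E^∨)` is a wide
subcategory of `B` (it contains all identities and is closed under composition),
and the datum `(B̄, E, E^∨)` is again a DK-triple, which is moreover reduced. -/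
theorem bbar_dkTriple (T : DKTriple B) :
    (∀ X : B, Bbar T (𝟙 X)) ∧
    (∀ {X Y Z : B} (f : X ⟶ Y) (g : Y ⟶ Z),
      Bbar T f → Bbar T g → Bbar T (f ≫ g)) ∧
    ∃ T' : DKTriple (WideSubcategory (Bbar T)),
      (∀ {X Y : WideSubcategory (Bbar T)} (f : X ⟶ Y), T'.E f ↔ T.E f.1) ∧
      (∀ {X Y : WideSubcategory (Bbar T)} (f : X ⟶ Y), T'.Edual f ↔ T.Edual f.1) ∧
      T'.Reduced :=
  ⟨(Bbar T).id_mem, fun f g => (Bbar T).comp_mem f g, bbarTriple T,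
    fun _ => Iff.rfl, fun _ => Iff.rfl, exists_ebar_edbar_fac⟩

end DK
end

section
/- Let 𝔹 = (B, E, E^∨) be a reduced DK-triple, i.e. B = E^∨ ∘ E. Then M = E^∨ (the Monos are exactly the dual Epis), Reg = E (the regular arrows are exactly the Epis), and M ∩ Reg consists exactly of the isomorphisms of B. -/
open CategoryTheory CategoryTheory.Limits

universe v u v' u'

/-!
In a reduced triple every arrow factors as `e ≫ d` with `e` an Epi and `d` a dual Epi; being a
Mono forces `e` to be invertible and being regular forces `d` to be invertible. For the converse
inclusions `E^∨ ⊆ M` and `E ⊆ Reg`, a factorization through a non-invertible (dual) Epi is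
compared, via the uniqueness in (T1), with the trivial factorization of the arrow; the comparison
isomorphism splits that (dual) Epi, and the invertible diagonal of (T2) shows that a split
(dual) Epi is invertible.
-/

namespace DK

section Category

variable {B : Type u} [Category.{v} B]

lemma isIso_of_isIso_comp_of_retraction {a b c : B} {d : a ⟶ b} {e : b ⟶ c} [IsIso (d ≫ e)]
    {r : c ⟶ b} (hr : e ≫ r = 𝟙 b) : IsIso e := by
  have : IsSplitMono e := IsSplitMono.mk' ⟨r, hr⟩
  have : Epi e := epi_of_epi d e
  exact isIso_of_epi_of_isSplitMono e

lemma isIso_of_isIso_comp_of_section {a b c : B} {d : a ⟶ b} {e : b ⟶ c} [IsIso (d ≫ e)]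
    {s : b ⟶ a} (hs : s ≫ d = 𝟙 b) : IsIso d := by
  have : IsSplitEpi d := IsSplitEpi.mk' ⟨s, hs⟩
  have : Mono d := mono_of_mono d e
  exact isIso_of_mono_of_isSplitEpi d

lemma isIso_of_Edual_of_regular {Edual : MorphismProperty B} {X Y : B} {f : X ⟶ Y}
    (hd : Edual f) (hr : Regular Edual f) : IsIso f := by
  by_contra hf
  exact hr ⟨X, 𝟙 X, f, hd, hf, (Category.id_comp f).symm⟩

namespace TriangularAt

variable {E Edual : MorphismProperty B} {b : B}

lemma exists_isIso_comp_of_E (h : TriangularAt E Edual b) {c : B} {e : b ⟶ c} (he : E e) :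
    ∃ (a : B) (d : a ⟶ b), IsIso (d ≫ e) := by
  obtain ⟨n, -, cE, eR, cD, dR, -, -, uniqE, -, diag, -⟩ := h
  obtain ⟨i, ⟨u, hu⟩, -⟩ := uniqE e he
  refine ⟨cD i, dR i, ?_⟩
  have : IsIso (dR i ≫ eR i) := diag i
  rw [show e = eR i ≫ u.inv by simp [← hu], ← Category.assoc]
  infer_instance

lemma exists_isIso_comp_of_Edual (h : TriangularAt E Edual b) {a : B} {d : a ⟶ b}
    (hd : Edual d) : ∃ (c : B) (e : b ⟶ c), IsIso (d ≫ e) := by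
  obtain ⟨n, -, cE, eR, cD, dR, -, -, -, uniqD, diag, -⟩ := h
  obtain ⟨j, ⟨v, hv⟩, -⟩ := uniqD d hd
  refine ⟨cE j, eR j, ?_⟩
  have : IsIso (dR j ≫ eR j) := diag j
  rw [← hv, Category.assoc]
  infer_instance

end TriangularAt

end Category

namespace DKTriple

variable {B : Type u} [Category.{v} B] (T : DKTriple B)

lemma isIso_of_E_of_retraction {b c : B} {e : b ⟶ c} (he : T.E e) {r : c ⟶ b}
    (hr : e ≫ r = 𝟙 b) : IsIso e := by
  obtain ⟨a, d, hde⟩ := (T.t2 b).exists_isIso_comp_of_E he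
  exact isIso_of_isIso_comp_of_retraction (d := d) hr

lemma isIso_of_Edual_of_section {a b : B} {d : a ⟶ b} (hd : T.Edual d) {s : b ⟶ a}
    (hs : s ≫ d = 𝟙 b) : IsIso d := by
  obtain ⟨c, e, hde⟩ := (T.t2 b).exists_isIso_comp_of_Edual hd
  exact isIso_of_isIso_comp_of_section (e := e) hs

lemma mon_id (b : B) : Mon T.E (𝟙 b) := by
  rintro ⟨Z, e, g, he, hne, hfac⟩
  exact hne (T.isIso_of_E_of_retraction he hfac.symm)

lemma regular_id (b : B) : Regular T.Edual (𝟙 b) := by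
  rintro ⟨Z, g, h, hd, hnh, hfac⟩
  exact hnh (T.isIso_of_Edual_of_section hd hfac.symm)

/- Reducible, so that `rw` sees the endpoints of the (T1) comparison isomorphisms between these
factorizations as the expected objects. -/
abbrev factOfEdual {X Y : B} {f : X ⟶ Y} (hf : T.Edual f) : Fact T.E T.Edual f :=
  ⟨X, X, 𝟙 X, 𝟙 X, f, T.E_iso _ inferInstance, ⟨T.mon_id X, T.regular_id X⟩, hf, by simp⟩

abbrev factOfE {X Y : B} {f : X ⟶ Y} (hf : T.E f) : Fact T.E T.Edual f :=
  ⟨Y, Y, f, 𝟙 Y, 𝟙 Y, hf, ⟨T.mon_id Y, T.regular_id Y⟩, T.Edual_iso _ inferInstance, by simp⟩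

abbrev factEComp {X Y Z : B} {e : X ⟶ Y} (he : T.E e) {g : Y ⟶ Z} (F : Fact T.E T.Edual g) :
    Fact T.E T.Edual (e ≫ g) :=
  ⟨F.Z, F.W, e ≫ F.e, F.m, F.d, T.E_comp he F.he, F.hm, F.hd, by
    rw [Category.assoc, F.fac]⟩

abbrev factCompEdual {X Y Z : B} {g : X ⟶ Y} (F : Fact T.E T.Edual g) {h : Y ⟶ Z}
    (hh : T.Edual h) : Fact T.E T.Edual (g ≫ h) :=
  ⟨F.Z, F.W, F.e, F.m, F.d ≫ h, F.he, F.hm, T.Edual_comp F.hd hh, by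
    simp only [← F.fac, Category.assoc]⟩

lemma mon_of_Edual {X Y : B} {f : X ⟶ Y} (hf : T.Edual f) : Mon T.E f := by
  rintro ⟨Z, e, g, he, hne, rfl⟩
  obtain ⟨F⟩ := T.t1_exists g
  obtain ⟨p, ⟨hp, -, -⟩, -⟩ := T.t1_unique (T.factEComp he F) (T.factOfEdual hf)
  have hp : (e ≫ F.e) ≫ p.1.hom = 𝟙 X := hp
  rw [Category.assoc] at hp
  exact hne (T.isIso_of_E_of_retraction he hp)

lemma regular_of_E {X Y : B} {f : X ⟶ Y} (hf : T.E f) : Regular T.Edual f := by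
  rintro ⟨Z, g, h, hd, hnh, rfl⟩
  obtain ⟨F⟩ := T.t1_exists g
  obtain ⟨p, ⟨-, -, hp⟩, -⟩ := T.t1_unique (T.factCompEdual F hd) (T.factOfE hf)
  have hp : p.2.hom ≫ 𝟙 Y = F.d ≫ h := hp
  refine hnh (T.isIso_of_Edual_of_section hd (s := p.2.inv ≫ F.d) ?_)
  rw [Category.assoc, ← hp, Category.comp_id, Iso.inv_hom_id]

namespace Reduced

variable {T}

lemma Edual_of_mon (hred : T.Reduced) {X Y : B} {f : X ⟶ Y} (hf : Mon T.E f) : T.Edual f := by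
  obtain ⟨W, e, d, he, hd, rfl⟩ := hred f
  have : IsIso e := by
    by_contra hne
    exact hf ⟨W, e, d, he, hne, rfl⟩
  exact T.Edual_comp (T.Edual_iso e this) hd

lemma E_of_regular (hred : T.Reduced) {X Y : B} {f : X ⟶ Y} (hf : Regular T.Edual f) :
    T.E f := by
  obtain ⟨W, e, d, he, hd, rfl⟩ := hred f
  have : IsIso d := by
    by_contra hnd
    exact hf ⟨W, e, d, hd, hnd, rfl⟩
  exact T.E_comp he (T.E_iso d this)

end Reduced

end DKTriple

/-- In a reduced DK-triple (`B = E^∨ ∘ E`), the Monos are exactly the dual Epis,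
the regular arrows are exactly the Epis, and `M ∩ Reg` consists exactly of the
isomorphisms of `B`. -/
theorem reduced_mono_eq_dual_reg_eq_epi_monoReg_eq_iso
    {B : Type u} [Category.{v} B] (T : DKTriple B) (hred : T.Reduced) :
    (∀ {X Y : B} (f : X ⟶ Y), Mon T.E f ↔ T.Edual f) ∧
    (∀ {X Y : B} (f : X ⟶ Y), Regular T.Edual f ↔ T.E f) ∧
    (∀ {X Y : B} (f : X ⟶ Y), (Mon T.E f ∧ Regular T.Edual f) ↔ IsIso f) := by
  refine ⟨fun f => ⟨hred.Edual_of_mon, T.mon_of_Edual⟩,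
    fun f => ⟨hred.E_of_regular, T.regular_of_E⟩, fun f => ⟨?_, ?_⟩⟩
  · rintro ⟨hm, hr⟩
    exact isIso_of_Edual_of_regular (hred.Edual_of_mon hm) hr
  · intro hf
    exact ⟨T.mon_of_Edual (T.Edual_iso f hf), T.regular_of_E (T.E_iso f hf)⟩

end DK
end

section
/- Let 𝔹 = (B, E, E^∨) be a DK-triple. Define a relation ≤ on the set π₀B of isomorphism classes of objects of B by declaring [b'] ≤ [b] if there exists a dual Epi b' → b. Then: (i) [b'] ≤ [b] holds if and only if there exists an Epi b → b'; (ii) ≤ is a partial order (reflexive, transitive, and antisymmetric: [b] ≤ [b'] ≤ [b] implies b ≅ b'); and (iii) for each b ∈ B the set of predecessors {[b'] ∈ π₀B : [b'] ≤ [b]} is finite. -/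
open CategoryTheory CategoryTheory.Limits

universe v u v' u'

namespace DK

variable {B : Type u} [Category.{v} B]

/-- Isomorphy of objects; `Quot (objRel B)` is `π₀B`. -/
def objRel (B : Type u) [Category.{v} B] : B → B → Prop :=
  fun a b => Nonempty (a ≅ b)

/-- The set `π₀B` of isomorphism classes of objects of `B`. -/
def Pi0 (B : Type u) [Category.{v} B] := Quot (objRel B)

/-- The relation `[b'] ≤ [b]` on `π₀B`: there exists a dual Epi `b' → b`. -/
def piLe (T : DKTriple B) : Pi0 B → Pi0 B → Prop := fun x y =>
  ∃ a b : B, x = Quot.mk _ a ∧ y = Quot.mk _ b ∧ ∃ d : a ⟶ b, T.Edual d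

lemma objRel_of_quot_eq {x y : B} (h : Quot.mk (objRel B) x = Quot.mk (objRel B) y) :
    Nonempty (x ≅ y) := by
  have h' := Quot.eqvGen_exact h
  clear h
  induction h' with
  | rel p q hpq => exact hpq
  | refl p => exact ⟨Iso.refl p⟩
  | symm p q _ ih => exact ⟨ih.some.symm⟩
  | trans p q w _ _ ih1 ih2 => exact ⟨ih1.some.trans ih2.some⟩

/-- Every dual Epi admits a retraction lying in `E`. -/
lemma retraction_of_dual (T : DKTriple B) {c b : B} (d : c ⟶ b) (hd : T.Edual d) :
    ∃ e : b ⟶ c, T.E e ∧ d ≫ e = 𝟙 c := by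
  obtain ⟨n, hn, cE, eR, cD, dR, hE, hD, clE, clD, diag, tri⟩ := T.t2 b
  obtain ⟨k, ⟨u, hu⟩, -⟩ := clD d hd
  haveI := diag k
  refine ⟨eR k ≫ inv (dR k ≫ eR k) ≫ u.inv, T.E_comp (hE k) (T.E_iso _ inferInstance), ?_⟩
  rw [← hu]
  rw [Category.assoc, ← Category.assoc (dR k), ← Category.assoc (dR k ≫ eR k),
    IsIso.hom_inv_id, Category.id_comp, u.hom_inv_id]

/-- Every Epi admits a section lying in `E^∨`. -/
lemma section_of_epi (T : DKTriple B) {b c : B} (e : b ⟶ c) (he : T.E e) :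
    ∃ d : c ⟶ b, T.Edual d ∧ d ≫ e = 𝟙 c := by
  obtain ⟨n, hn, cE, eR, cD, dR, hE, hD, clE, clD, diag, tri⟩ := T.t2 b
  obtain ⟨k, ⟨v, hv⟩, -⟩ := clE e he
  haveI := diag k
  refine ⟨v.hom ≫ inv (dR k ≫ eR k) ≫ dR k,
    T.Edual_comp (T.Edual_iso _ inferInstance)
      (T.Edual_comp (T.Edual_iso _ inferInstance) (hD k)), ?_⟩
  have he' : e = eR k ≫ v.inv := by rw [← hv, Category.assoc, v.hom_inv_id, Category.comp_id]
  rw [he', Category.assoc, Category.assoc, ← Category.assoc (dR k),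
    ← Category.assoc (inv (dR k ≫ eR k)), IsIso.inv_hom_id, Category.id_comp, v.hom_inv_id]

/-- A dual Epi admitting a section is an isomorphism. -/
lemma isIso_dual_of_section (T : DKTriple B) {Z a : B} (h : Z ⟶ a) (hh : T.Edual h)
    (g : a ⟶ Z) (hg : g ≫ h = 𝟙 a) : IsIso h := by
  obtain ⟨n, hn, cE, eR, cD, dR, hE, hD, clE, clD, diag, tri⟩ := T.t2 a
  obtain ⟨k, ⟨u, hu⟩, -⟩ := clD h hh
  haveI := diag k
  have hs : (g ≫ u.hom) ≫ dR k = 𝟙 a := by rw [Category.assoc, hu, hg]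
  have h4 : (g ≫ u.hom) ≫ dR k ≫ eR k = eR k := by
    rw [← Category.assoc, hs, Category.id_comp]
  have hs2 : g ≫ u.hom = eR k ≫ inv (dR k ≫ eR k) := by
    rw [IsIso.eq_comp_inv, Category.assoc]
    rw [Category.assoc] at h4
    exact h4
  have hinv : dR k ≫ g ≫ u.hom = 𝟙 (cD k) := by
    rw [hs2, ← Category.assoc, IsIso.hom_inv_id]
  have : IsIso (dR k) := ⟨g ≫ u.hom, hinv, hs⟩
  rw [← hu]
  infer_instance

/-- A dual Epi endomorphism is an isomorphism. -/
lemma isIso_dual_endo (T : DKTriple B) {a : B} (t : a ⟶ a) (ht : T.Edual t) : IsIso t := by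
  obtain ⟨r, hrE, hr⟩ := retraction_of_dual T t ht
  obtain ⟨n, hn, cE, eR, cD, dR, hE, hD, clE, clD, diag, tri⟩ := T.t2 a
  have hdual : ∀ k : Fin n, T.Edual (dR k ≫ t) := fun k => T.Edual_comp (hD k) ht
  choose ψ hψ hψu using fun k : Fin n => clD (dR k ≫ t) (hdual k)
  have hinj : Function.Injective ψ := by
    intro k k' hkk'
    obtain ⟨u, hu⟩ := hψ k
    have h5 : DualEquiv (dR k' ≫ t) (dR (ψ k)) := hkk' ▸ hψ k'
    obtain ⟨u', hu'⟩ := h5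
    have heq : (u.trans u'.symm).hom ≫ dR k' ≫ t = dR k ≫ t := by
      have : dR (ψ k) = u'.inv ≫ (dR k' ≫ t) := by
        rw [← hu', ← Category.assoc, u'.inv_hom_id, Category.id_comp]
      rw [← hu, this]
      simp
    have heq2 : (u.trans u'.symm).hom ≫ dR k' = dR k := by
      have h3 := congrArg (fun f => f ≫ r) heq
      simp only [Category.assoc, hr, Category.comp_id] at h3
      exact h3
    obtain ⟨m, hm, hmu⟩ := clD (dR k) (hD k)
    have h1 : k = m := hmu k ⟨Iso.refl _, Category.id_comp _⟩
    have h2 : k' = m := hmu k' ⟨u.trans u'.symm, heq2⟩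
    rw [h1, h2]
  obtain ⟨p, ⟨w, hw⟩, -⟩ := clD (𝟙 a) (T.Edual_iso _ inferInstance)
  obtain ⟨k, hk⟩ := (Finite.injective_iff_bijective.mp hinj).2 p
  have h6 : DualEquiv (dR k ≫ t) (dR p) := hk ▸ hψ k
  obtain ⟨u, hu⟩ := h6
  have hdRp : IsIso (dR p) := by
    have : dR p = w.inv := by
      rw [← Category.id_comp (dR p), ← w.inv_hom_id, Category.assoc, hw, Category.comp_id]
    rw [this]; infer_instance
  have hiso : IsIso (dR k ≫ t) := by rw [← hu]; infer_instance
  exact isIso_dual_of_section T t ht (inv (dR k ≫ t) ≫ dR k)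
    (by rw [Category.assoc, IsIso.inv_hom_id])

/-- The relation `≤` on `π₀B` induced by a DK-triple: (i) `[a] ≤ [b]` iff there
is a dual Epi `a → b` iff there is an Epi `b → a`; (ii) `≤` is a partial order
(reflexive, transitive and antisymmetric); (iii) every element of `π₀B` has only
finitely many predecessors. -/
theorem piLe_partialOrder (T : DKTriple B) :
    (∀ a b : B, piLe T (Quot.mk _ a) (Quot.mk _ b) ↔ ∃ e : b ⟶ a, T.E e) ∧
    (∀ x : Pi0 B, piLe T x x) ∧
    (∀ x y z : Pi0 B, piLe T x y → piLe T y z → piLe T x z) ∧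
    (∀ x y : Pi0 B, piLe T x y → piLe T y x → x = y) ∧
    (∀ b : B, {x : Pi0 B | piLe T x (Quot.mk _ b)}.Finite) := by
  have hiff : ∀ a b : B, piLe T (Quot.mk _ a) (Quot.mk _ b) ↔ ∃ e : b ⟶ a, T.E e := by
    intro a b
    constructor
    · rintro ⟨a₀, b₀, hx, hy, d, hd⟩
      obtain ⟨ia⟩ := objRel_of_quot_eq hx
      obtain ⟨ib⟩ := objRel_of_quot_eq hy
      have hd' : T.Edual (ia.hom ≫ d ≫ ib.inv) :=
        T.Edual_comp (T.Edual_iso _ inferInstance)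
          (T.Edual_comp hd (T.Edual_iso _ inferInstance))
      obtain ⟨e, he, -⟩ := retraction_of_dual T _ hd'
      exact ⟨e, he⟩
    · rintro ⟨e, he⟩
      obtain ⟨d, hd, -⟩ := section_of_epi T e he
      exact ⟨a, b, rfl, rfl, d, hd⟩
  refine ⟨hiff, ?_, ?_, ?_, ?_⟩
  · intro x
    induction x using Quot.ind with
    | _ a => exact ⟨a, a, rfl, rfl, 𝟙 a, T.Edual_iso _ inferInstance⟩
  · rintro x y z ⟨a₀, b₀, hx, hy, d₁, hd₁⟩ ⟨b₁, c₁, hy', hz, d₂, hd₂⟩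
    obtain ⟨j⟩ := objRel_of_quot_eq (hy.symm.trans hy')
    exact ⟨a₀, c₁, hx, hz, d₁ ≫ j.hom ≫ d₂,
      T.Edual_comp hd₁ (T.Edual_comp (T.Edual_iso _ inferInstance) hd₂)⟩
  · rintro x y ⟨a₁, b₁, hx1, hy1, d, hd⟩ ⟨b₂, a₂, hy2, hx2, d₂, hd₂⟩
    obtain ⟨ja⟩ := objRel_of_quot_eq (hx1.symm.trans hx2)
    obtain ⟨jb⟩ := objRel_of_quot_eq (hy1.symm.trans hy2)
    have hd'' : T.Edual (jb.hom ≫ d₂ ≫ ja.inv) :=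
      T.Edual_comp (T.Edual_iso _ inferInstance)
        (T.Edual_comp hd₂ (T.Edual_iso _ inferInstance))
    set d'' : b₁ ⟶ a₁ := jb.hom ≫ d₂ ≫ ja.inv
    have ht : IsIso (d ≫ d'') := isIso_dual_endo T _ (T.Edual_comp hd hd'')
    have ht' : IsIso (d'' ≫ d) := isIso_dual_endo T _ (T.Edual_comp hd'' hd)
    have hIso : IsIso d := by
      refine ⟨d'' ≫ inv (d ≫ d''), ?_, ?_⟩
      · rw [← Category.assoc, IsIso.hom_inv_id]
      · rw [← cancel_mono (d'' ≫ d)]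
        simp only [Category.assoc, Category.id_comp]
        rw [← Category.assoc d d'', IsIso.inv_hom_id_assoc]
    rw [hx1, hy1]
    exact Quot.sound ⟨asIso d⟩
  · intro b
    obtain ⟨n, hn, cE, eR, cD, dR, hE, hD, clE, clD, diag, tri⟩ := T.t2 b
    apply Set.Finite.subset (Set.finite_range (fun k : Fin n => Quot.mk (objRel B) (cD k)))
    rintro x ⟨a₀, b₀, hx, hb, d, hd⟩
    obtain ⟨j⟩ := objRel_of_quot_eq hb
    have hd' : T.Edual (d ≫ j.inv) := T.Edual_comp hd (T.Edual_iso _ inferInstance)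
    obtain ⟨k, ⟨u, hu⟩, -⟩ := clD (d ≫ j.inv) hd'
    exact ⟨k, by rw [hx]; exact Quot.sound ⟨u.symm⟩⟩

end DK
end

section
/- Let f : [n] → [m] be a morphism in the simplex category Δ. Then there exist unique natural numbers k ≤ k' ≤ m and unique morphisms e : [n] → [k] and s : [k'] → [m] in Δ with e surjective, s injective and s(0) = 0, such that either k' = k and f = s ∘ e, or k' = k + 1 and f = s ∘ d⁰ ∘ e, where d⁰ : [k] → [k+1] is the injective monotone map whose image omits 0. Moreover, the first case occurs exactly when 0 lies in the image of f, and the second exactly when it does not. -/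
open CategoryTheory SimplexCategory

private lemma aux_card_image {n c m : ℕ}
    (g : Fin (n + 1) → Fin (c + 1)) (h : Fin (c + 1) → Fin (m + 1))
    (hg : Function.Surjective g) (hh : Function.Injective h) :
    (Finset.image (fun i => h (g i)) Finset.univ).card = c + 1 := by
  have : Finset.image (fun i => h (g i)) Finset.univ = Finset.image h Finset.univ := by
    rw [show (fun i => h (g i)) = h ∘ g from rfl, ← Finset.image_image,
      Finset.image_univ_of_surjective hg]
  rw [this, Finset.card_image_of_injective _ hh, Finset.card_univ, Fintype.card_fin]

private lemma aux_delta0 {k : ℕ} (x : Fin (k + 1)) :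
    (SimplexCategory.δ (0 : Fin (k + 2))).toOrderHom x = x.succ := by
  simp [SimplexCategory.δ, Fin.zero_succAbove]

private lemma aux_comp {a b c : ℕ} (e : SimplexCategory.mk a ⟶ SimplexCategory.mk b)
    (s : SimplexCategory.mk b ⟶ SimplexCategory.mk c) (i : Fin (a + 1)) :
    (e ≫ s).toOrderHom i = s.toOrderHom (e.toOrderHom i) := rfl

private lemma aux_ext {a b : ℕ} (e e' : SimplexCategory.mk a ⟶ SimplexCategory.mk b)
    (h : ∀ i, e.toOrderHom i = e'.toOrderHom i) : e = e' :=
  SimplexCategory.Hom.ext _ _ (OrderHom.ext _ _ (funext h))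

/-- Every morphism `f : [n] → [m]` of the simplex category factors, uniquely, as
`s ∘ e` or as `s ∘ d⁰ ∘ e` with `e` surjective and `s` a minimum-preserving
injection; the first case occurs exactly when `0` lies in the image of `f`, the
second exactly when it does not. -/
theorem simplex_unique_epi_coface_minInj_factorization (n m : ℕ)
    (f : SimplexCategory.mk n ⟶ SimplexCategory.mk m) :
    ((∃ i, f.toOrderHom i = 0) →
      (∃! p : Σ k : ℕ, (SimplexCategory.mk n ⟶ SimplexCategory.mk k) ×
          (SimplexCategory.mk k ⟶ SimplexCategory.mk m),
        p.1 ≤ m ∧ Function.Surjective p.2.1.toOrderHom ∧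
          Function.Injective p.2.2.toOrderHom ∧ p.2.2.toOrderHom 0 = 0 ∧
          f = p.2.1 ≫ p.2.2) ∧
      ¬ ∃ p : Σ k : ℕ, (SimplexCategory.mk n ⟶ SimplexCategory.mk k) ×
          (SimplexCategory.mk (k + 1) ⟶ SimplexCategory.mk m),
        p.1 + 1 ≤ m ∧ Function.Surjective p.2.1.toOrderHom ∧
          Function.Injective p.2.2.toOrderHom ∧ p.2.2.toOrderHom 0 = 0 ∧
          f = p.2.1 ≫ SimplexCategory.δ (0 : Fin (p.1 + 2)) ≫ p.2.2) ∧
    ((¬ ∃ i, f.toOrderHom i = 0) →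
      (∃! p : Σ k : ℕ, (SimplexCategory.mk n ⟶ SimplexCategory.mk k) ×
          (SimplexCategory.mk (k + 1) ⟶ SimplexCategory.mk m),
        p.1 + 1 ≤ m ∧ Function.Surjective p.2.1.toOrderHom ∧
          Function.Injective p.2.2.toOrderHom ∧ p.2.2.toOrderHom 0 = 0 ∧
          f = p.2.1 ≫ SimplexCategory.δ (0 : Fin (p.1 + 2)) ≫ p.2.2) ∧
      ¬ ∃ p : Σ k : ℕ, (SimplexCategory.mk n ⟶ SimplexCategory.mk k) ×
          (SimplexCategory.mk k ⟶ SimplexCategory.mk m),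
        p.1 ≤ m ∧ Function.Surjective p.2.1.toOrderHom ∧
          Function.Injective p.2.2.toOrderHom ∧ p.2.2.toOrderHom 0 = 0 ∧
          f = p.2.1 ≫ p.2.2) := by
  simp only [SimplexCategory.len_mk]
  set F : Fin (n + 1) →o Fin (m + 1) := f.toOrderHom with hF
  set S : Finset (Fin (m + 1)) := Finset.image F Finset.univ with hS
  have hmemS : ∀ i, F i ∈ S := fun i => Finset.mem_image_of_mem F (Finset.mem_univ i)
  obtain ⟨k, hk⟩ : ∃ k, S.card = k + 1 :=
    ⟨S.card - 1, (Nat.succ_pred_eq_of_pos (Finset.card_pos.mpr ⟨F 0, hmemS 0⟩)).symm⟩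
  constructor
  · rintro ⟨i0, hi0⟩
    have h0S : (0 : Fin (m + 1)) ∈ S := hi0 ▸ hmemS i0
    set σ : Fin (k + 1) ↪o Fin (m + 1) := S.orderEmbOfFin hk with hσ
    have hσ0 : σ 0 = 0 := by
      rw [hσ, show (0 : Fin (k + 1)) = ⟨0, Nat.succ_pos k⟩ from rfl,
        Finset.orderEmbOfFin_zero hk (Nat.succ_pos k)]
      exact le_antisymm (Finset.min'_le S 0 h0S) (Fin.zero_le _)
    set J : Fin (n + 1) → Fin (k + 1) := fun i => (S.orderIsoOfFin hk).symm ⟨F i, hmemS i⟩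
      with hJ
    have hkey : ∀ i, σ (J i) = F i := fun i => by
      rw [hσ, hJ, ← Finset.coe_orderIsoOfFin_apply, OrderIso.apply_symm_apply]
    have hJmono : Monotone J := fun i j hij =>
      (S.orderIsoOfFin hk).symm.monotone (Subtype.mk_le_mk.mpr (F.monotone hij))
    have hJsurj : Function.Surjective J := by
      intro j
      obtain ⟨i, -, hi⟩ := Finset.mem_image.mp (Finset.orderEmbOfFin_mem S hk j)
      exact ⟨i, σ.injective (by rw [hkey i, ← hi])⟩
    set e : SimplexCategory.mk n ⟶ SimplexCategory.mk k :=
      SimplexCategory.mkHom ⟨J, hJmono⟩ with he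
    set s : SimplexCategory.mk k ⟶ SimplexCategory.mk m :=
      SimplexCategory.mkHom ⟨fun x => σ x, σ.monotone⟩ with hs
    constructor
    · refine ⟨⟨k, e, s⟩, ⟨?_, hJsurj, σ.injective, hσ0, ?_⟩, ?_⟩
      · show k ≤ m
        have := Finset.card_le_univ S
        simp only [hk, Finset.card_univ, Fintype.card_fin] at this
        omega
      · exact aux_ext _ _ (fun i => (hkey i).symm)
      · rintro ⟨k', e', s'⟩ ⟨-, he', hs', -, hfact⟩
        have hps : ∀ i, s'.toOrderHom (e'.toOrderHom i) = F i := fun i => by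
          rw [hF, hfact]; rfl
        have himg : S = Finset.image (fun i => s'.toOrderHom (e'.toOrderHom i))
            Finset.univ := by
          rw [hS]; exact Finset.image_congr (fun i _ => (hps i).symm)
        have hcard : S.card = k' + 1 := by
          rw [himg]; exact aux_card_image _ _ he' hs'
        obtain rfl : k' = k := by omega
        have hs'eq : s' = s := by
          refine aux_ext _ _ (fun x => ?_)
          have hmem : ∀ x, s'.toOrderHom x ∈ S := by
            intro x
            obtain ⟨i, rfl⟩ := he' x
            exact (hps i) ▸ hmemS i
          have hsm : StrictMono s'.toOrderHom :=
            s'.toOrderHom.monotone.strictMono_of_injective hs'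
          exact congrFun (Finset.orderEmbOfFin_unique hk hmem hsm) x
        subst hs'eq
        have he'eq : e' = e := by
          refine aux_ext _ _ (fun i => σ.injective ?_)
          exact (hps i).trans (hkey i).symm
        rw [he'eq]
    · rintro ⟨⟨k'', e'', s''⟩, -, -, hinj, h0'', hfact⟩
      have hval : F i0 = s''.toOrderHom (Fin.succ (e''.toOrderHom i0)) := by
        rw [hF, hfact]
        exact congrArg s''.toOrderHom (aux_delta0 (e''.toOrderHom i0))
      have h0A : s''.toOrderHom 0 = 0 := h0''
      have hsm : StrictMono s''.toOrderHom :=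
        s''.toOrderHom.monotone.strictMono_of_injective hinj
      have hpos : (0 : Fin (m + 1)) < s''.toOrderHom (Fin.succ (e''.toOrderHom i0)) := by
        have := hsm (Fin.succ_pos (e''.toOrderHom i0))
        rwa [h0A] at this
      rw [← hval, hi0] at hpos
      exact lt_irrefl _ hpos
  · intro h0
    have h0S : (0 : Fin (m + 1)) ∉ S := by
      intro hmem
      obtain ⟨i, -, hi⟩ := Finset.mem_image.mp hmem
      exact h0 ⟨i, hi⟩
    set S' : Finset (Fin (m + 1)) := insert 0 S with hS'
    have hk2 : S'.card = k + 2 := by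
      rw [hS', Finset.card_insert_of_notMem h0S, hk]
    set σ : Fin (k + 2) ↪o Fin (m + 1) := S'.orderEmbOfFin hk2 with hσ
    have hσ0 : σ 0 = 0 := by
      rw [hσ, show (0 : Fin (k + 2)) = ⟨0, Nat.succ_pos _⟩ from rfl,
        Finset.orderEmbOfFin_zero hk2 (Nat.succ_pos _)]
      exact le_antisymm (Finset.min'_le S' 0 (Finset.mem_insert_self 0 S)) (Fin.zero_le _)
    have hmemS' : ∀ i, F i ∈ S' := fun i => Finset.mem_insert_of_mem (hmemS i)
    set J : Fin (n + 1) → Fin (k + 2) := fun i => (S'.orderIsoOfFin hk2).symm ⟨F i, hmemS' i⟩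
      with hJ
    have hkeyJ : ∀ i, σ (J i) = F i := fun i => by
      rw [hσ, hJ, ← Finset.coe_orderIsoOfFin_apply, OrderIso.apply_symm_apply]
    have hJmono : Monotone J := fun i j hij =>
      (S'.orderIsoOfFin hk2).symm.monotone (Subtype.mk_le_mk.mpr (F.monotone hij))
    have hJne : ∀ i, J i ≠ 0 := by
      intro i hi
      exact h0 ⟨i, (hkeyJ i).symm.trans (by rw [hi, hσ0])⟩
    set ι : Fin (n + 1) → Fin (k + 1) := fun i => (J i).pred (hJne i) with hι
    have hιmono : Monotone ι := fun i j hij => Fin.pred_le_pred_iff.mpr (hJmono hij)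
    have hkey : ∀ i, σ (Fin.succ (ι i)) = F i := fun i => by
      rw [hι]; simp only [Fin.succ_pred]; exact hkeyJ i
    have hιsurj : Function.Surjective ι := by
      intro j
      have hmem : σ (Fin.succ j) ∈ S' := Finset.orderEmbOfFin_mem S' hk2 _
      have hne : σ (Fin.succ j) ≠ 0 := by
        intro hzero
        exact Fin.succ_ne_zero j (σ.injective (by rw [hzero, hσ0]))
      have : σ (Fin.succ j) ∈ S := by
        rcases Finset.mem_insert.mp hmem with h | h
        · exact absurd h hne
        · exact h
      obtain ⟨i, -, hi⟩ := Finset.mem_image.mp this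
      refine ⟨i, ?_⟩
      have : J i = Fin.succ j := σ.injective (by rw [hkeyJ i, ← hi])
      rw [hι]; simp [this]
    set e : SimplexCategory.mk n ⟶ SimplexCategory.mk k :=
      SimplexCategory.mkHom ⟨ι, hιmono⟩ with he
    set s : SimplexCategory.mk (k + 1) ⟶ SimplexCategory.mk m :=
      SimplexCategory.mkHom ⟨fun x => σ x, σ.monotone⟩ with hs
    constructor
    · refine ⟨⟨k, e, s⟩, ⟨?_, hιsurj, σ.injective, hσ0, ?_⟩, ?_⟩
      · show k + 1 ≤ m
        have := Finset.card_le_univ S'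
        simp only [hk2, Finset.card_univ, Fintype.card_fin] at this
        omega
      · refine aux_ext _ _ (fun i => ?_)
        exact ((congrArg s.toOrderHom (aux_delta0 (ι i))).trans (hkey i)).symm
      · rintro ⟨k', e', s'⟩ ⟨-, he', hs', hs'0, hfact⟩
        have hps : ∀ i, s'.toOrderHom (Fin.succ (e'.toOrderHom i)) = F i := fun i => by
          rw [hF, hfact]
          exact (congrArg s'.toOrderHom (aux_delta0 (e'.toOrderHom i))).symm
        have hcard : S.card = k' + 1 := by
          have himg : S = Finset.image
              (fun i => s'.toOrderHom (Fin.succ (e'.toOrderHom i))) Finset.univ := by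
            rw [hS]; exact Finset.image_congr (fun i _ => (hps i).symm)
          rw [himg]
          exact aux_card_image e'.toOrderHom (fun x => s'.toOrderHom (Fin.succ x)) he'
            (hs'.comp (Fin.succ_injective _))
        obtain rfl : k' = k := by omega
        have hs'eq : s' = s := by
          refine aux_ext _ _ (fun x => ?_)
          have hmem : ∀ x, s'.toOrderHom x ∈ S' := by
            intro x
            have hs'0A : s'.toOrderHom 0 = 0 := hs'0
            induction x using Fin.cases with
            | zero => rw [hs'0A]; exact Finset.mem_insert_self 0 S
            | succ y =>
              obtain ⟨i, rfl⟩ := he' y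
              exact (hps i) ▸ hmemS' i
          have hsm : StrictMono s'.toOrderHom :=
            s'.toOrderHom.monotone.strictMono_of_injective hs'
          exact congrFun (Finset.orderEmbOfFin_unique hk2 hmem hsm) x
        subst hs'eq
        have he'eq : e' = e := by
          refine aux_ext _ _ (fun i => Fin.succ_injective _ (σ.injective ?_))
          exact (hps i).trans (hkey i).symm
        rw [he'eq]
    · rintro ⟨⟨k'', e'', s''⟩, -, hsurj'', -, h0'', hfact⟩
      obtain ⟨i, hi⟩ := hsurj'' 0
      refine h0 ⟨i, ?_⟩
      rw [hF, hfact]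
      have hiA : e''.toOrderHom i = 0 := hi
      have h0A : s''.toOrderHom 0 = 0 := h0''
      show s''.toOrderHom (e''.toOrderHom i) = 0
      rw [hiA, h0A]
end

section
/- Let e, e' : [n] → [m] be surjective morphisms in the simplex category Δ, with minimal sections e^∨, e'^∨ : [m] → [n] defined by e^∨(i) = min e⁻¹{i} and e'^∨(i) = min e'⁻¹{i}. If the composite e' ∘ e^∨ : [m] → [m] is an isomorphism (equivalently, e' ∘ e^∨ = id_{[m]}), then e'^∨(i) ≤ e^∨(i) for all i ∈ [m]. Consequently, if both e' ∘ e^∨ and e ∘ e'^∨ are isomorphisms, then e = e'. -/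
open CategoryTheory SimplexCategory

/-- The minimal section `e^∨ : [m] → [n]`, `i ↦ min e⁻¹{i}`, of a surjective
morphism `e : [n] → [m]` of the simplex category. -/
noncomputable def minSec {n m : ℕ} (e : SimplexCategory.mk n ⟶ SimplexCategory.mk m)
    (he : Function.Surjective e.toOrderHom) : Fin (m + 1) → Fin (n + 1) :=
  fun i => (Finset.univ.filter fun j => e.toOrderHom j = i).min'
    (by obtain ⟨j, hj⟩ := he i
        exact ⟨j, Finset.mem_filter.mpr ⟨Finset.mem_univ j, hj⟩⟩)

lemma apply_minSec {n m : ℕ} (e : SimplexCategory.mk n ⟶ SimplexCategory.mk m)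
    (he : Function.Surjective e.toOrderHom) (i : Fin (m + 1)) :
    e.toOrderHom (minSec e he i) = i := by
  have := Finset.min'_mem (Finset.univ.filter fun j => e.toOrderHom j = i)
    (by obtain ⟨j, hj⟩ := he i
        exact ⟨j, Finset.mem_filter.mpr ⟨Finset.mem_univ j, hj⟩⟩)
  exact (Finset.mem_filter.mp this).2

lemma minSec_le {n m : ℕ} (e : SimplexCategory.mk n ⟶ SimplexCategory.mk m)
    (he : Function.Surjective e.toOrderHom) {i : Fin (m + 1)} {j : Fin (n + 1)}
    (h : e.toOrderHom j = i) : minSec e he i ≤ j :=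
  Finset.min'_le _ _ (Finset.mem_filter.mpr ⟨Finset.mem_univ j, h⟩)

lemma minSec_mono {n m : ℕ} (e : SimplexCategory.mk n ⟶ SimplexCategory.mk m)
    (he : Function.Surjective e.toOrderHom) : Monotone (minSec e he) := by
  intro i i' h
  by_contra hc
  push_neg at hc
  have h1 : (i' : Fin (m+1)) ≤ i := by
    have := e.toOrderHom.monotone hc.le
    rwa [apply_minSec, apply_minSec] at this
  have : i = i' := le_antisymm h h1
  subst this
  exact absurd (minSec_le e he (apply_minSec e he i)) (not_le.mpr hc)

lemma strictMono_surj_id {m : ℕ} (f : Fin (m + 1) → Fin (m + 1))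
    (hf : StrictMono f) (hs : Function.Surjective f) : ∀ i, f i = i := by
  haveI : WellFoundedLT (Fin (m + 1)) := inferInstance
  haveI : WellFoundedGT (Fin (m + 1)) := inferInstance
  intro i
  exact le_antisymm (StrictMono.apply_le hf) (StrictMono.le_apply hf)

/-- For surjections `e, e' : [n] → [m]` in `Δ` with minimal sections `e^∨, e'^∨`:
if `e' ∘ e^∨` is an isomorphism then `e'^∨ ≤ e^∨` pointwise; consequently if both
`e' ∘ e^∨` and `e ∘ e'^∨` are isomorphisms then `e = e'`. -/
theorem minSec_le_of_comp_isIso (n m : ℕ)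
    (e e' : SimplexCategory.mk n ⟶ SimplexCategory.mk m)
    (he : Function.Surjective e.toOrderHom)
    (he' : Function.Surjective e'.toOrderHom) :
    (Function.Bijective (fun i => e'.toOrderHom (minSec e he i)) →
      ∀ i, minSec e' he' i ≤ minSec e he i) ∧
    (Function.Bijective (fun i => e'.toOrderHom (minSec e he i)) →
      Function.Bijective (fun i => e.toOrderHom (minSec e' he' i)) →
      e = e') := by
  have key : ∀ (f f' : SimplexCategory.mk n ⟶ SimplexCategory.mk m)
      (hf : Function.Surjective f.toOrderHom) (hf' : Function.Surjective f'.toOrderHom),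
      Function.Bijective (fun i => f'.toOrderHom (minSec f hf i)) →
      ∀ i, minSec f' hf' i ≤ minSec f hf i := by
    intro f f' hf hf' hbij i
    have hmono : Monotone (fun i => f'.toOrderHom (minSec f hf i)) :=
      fun a b h => f'.toOrderHom.monotone (minSec_mono f hf h)
    have hsm : StrictMono (fun i => f'.toOrderHom (minSec f hf i)) :=
      hmono.strictMono_of_injective hbij.1
    have hid := strictMono_surj_id _ hsm hbij.2
    exact minSec_le f' hf' (hid i)
  refine ⟨key e e' he he', fun h1 h2 => ?_⟩
  have hle1 := key e e' he he' h1
  have hle2 := key e' e he' he h2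
  have hsec : minSec e he = minSec e' he' :=
    funext fun i => le_antisymm (hle2 i) (hle1 i)
  apply SimplexCategory.Hom.ext
  apply OrderHom.ext
  funext j
  have hle : ∀ (f f' : SimplexCategory.mk n ⟶ SimplexCategory.mk m)
      (hf : Function.Surjective f.toOrderHom) (hf' : Function.Surjective f'.toOrderHom),
      minSec f hf = minSec f' hf' → ∀ j, f.toOrderHom j ≤ f'.toOrderHom j := by
    intro f f' hf hf' hs j
    have h1 : minSec f' hf' (f.toOrderHom j) ≤ j := by
      rw [← hs]; exact minSec_le f hf rfl
    have := f'.toOrderHom.monotone h1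
    rwa [apply_minSec] at this
  exact le_antisymm (hle e e' he he' hsec j) (hle e' e he' he hsec.symm j)
end

section
/- Let 𝔹 = (B, E, E^∨) be a DK-triple that is partially monotone, i.e. there is no Mono m : b' → b with [b'] > [b] in the partial order on isomorphism classes of objects of B (where [b'] ≤ [b] iff there exists a dual Epi b' → b, equivalently an Epi b → b'). Let C be a category, X : B → C a functor, and b ∈ B an object. Then X is a pointwise right Kan extension at b of its restriction to the full subcategory B_{<b} ⊆ B spanned by the objects strictly smaller than b, if and only if the cone with apex X(b) and legs X(e) : X(b) → X(b') over the diagram E_≠(b) → C (sending a non-invertible Epi e : b → b' to X(b') and a morphism of Epis under b to the image under X of the underlying morphism of B) is a limit cone in C. -/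
open CategoryTheory CategoryTheory.Limits

universe v u v' u'

namespace DK

variable {B : Type u} [Category.{v} B] {C : Type u'} [Category.{v'} C]

/-- `[a] ≤ [b]`: there exists a dual Epi `a → b`. -/
def ObjLe (T : DKTriple B) (a b : B) : Prop := ∃ d : a ⟶ b, T.Edual d

/-- `[a] < [b]`: `[a] ≤ [b]` but not `[b] ≤ [a]`. -/
def ObjLt (T : DKTriple B) (a b : B) : Prop := ObjLe T a b ∧ ¬ ObjLe T b a

/-- A DK-triple is partially monotone if there is no Mono `m : b' → b` with
`[b'] > [b]`. -/
def PartiallyMonotone (T : DKTriple B) : Prop :=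
  ∀ {b' b : B} (m : b' ⟶ b), Mon T.E m → ¬ ObjLt T b b'

/-- The full subcategory `B_{<b}` of objects strictly smaller than `b`. -/
abbrev Blt (T : DKTriple B) (b : B) := ObjectProperty.FullSubcategory (fun b'' => ObjLt T b'' b)

/-- The comma category `(B_{<b})_{b/}` of arrows `b → b''` with `b'' ∈ B_{<b}`. -/
abbrev BltUnder (T : DKTriple B) (b : B) :=
  StructuredArrow b (ObjectProperty.ι (fun b'' => ObjLt T b'' b))

/-- The canonical diagram `(B_{<b})_{b/} → B → C` used to compute the pointwise
right Kan extension of `X|_{B_{<b}}` at `b`. -/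
def kanDiagram (T : DKTriple B) (b : B) (X : B ⥤ C) : BltUnder T b ⥤ C :=
  StructuredArrow.proj b (ObjectProperty.ι (fun b'' => ObjLt T b'' b)) ⋙
    ObjectProperty.ι (fun b'' => ObjLt T b'' b) ⋙ X

/-- The canonical cone with apex `X(b)` over `kanDiagram`; `X` is a pointwise
right Kan extension at `b` of its restriction to `B_{<b}` iff this cone is a
limit cone. -/
def kanCone (T : DKTriple B) (b : B) (X : B ⥤ C) : Limits.Cone (kanDiagram T b X) where
  pt := X.obj b
  π :=
    { app := fun f => X.map f.hom
      naturality := by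
        intro f f' g
        dsimp [kanDiagram]
        exact (Category.id_comp _).trans
          ((congrArg X.map (StructuredArrow.w g)).symm.trans (X.map_comp _ _)) }

/-- The category `E_≠(b)` of non-invertible Epis out of `b`. -/
structure EpiNe (T : DKTriple B) (b : B) where
  tgt : B
  e : b ⟶ tgt
  he : T.E e
  hni : ¬ IsIso e

instance (T : DKTriple B) (b : B) : Category.{v} (EpiNe T b) where
  Hom x y := {u : x.tgt ⟶ y.tgt // T.E u ∧ x.e ≫ u = y.e}
  id x := ⟨𝟙 x.tgt, T.E_iso _ inferInstance, Category.comp_id _⟩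
  comp {x y z} u v := ⟨u.1 ≫ v.1, T.E_comp u.2.1 v.2.1, by
    rw [← Category.assoc, u.2.2, v.2.2]⟩
  id_comp := by intros; apply Subtype.ext; simp
  comp_id := by intros; apply Subtype.ext; simp
  assoc := by intros; apply Subtype.ext; simp

/-- The diagram `E_≠(b) → C` sending a non-invertible Epi `e : b ↠ b'` to
`X(b')`. -/
def epiDiagram (T : DKTriple B) (b : B) (X : B ⥤ C) : EpiNe T b ⥤ C where
  obj x := X.obj x.tgt
  map u := X.map u.1
  map_id := by intro x; exact X.map_id _
  map_comp := by intro x y z u v; exact X.map_comp _ _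

/-- The canonical cone with apex `X(b)` over `epiDiagram`, with legs `X(e)` for
every non-invertible Epi `e` out of `b`. -/
def epiCone (T : DKTriple B) (b : B) (X : B ⥤ C) : Limits.Cone (epiDiagram T b X) where
  pt := X.obj b
  π :=
    { app := fun x => X.map x.e
      naturality := by
        intro x y u
        dsimp [epiDiagram]
        rw [Category.id_comp, ← X.map_comp, u.2.2] }

/-! Every factorization `f = g ∘ e` of an arrow `f : b → b''` through an Epi `e` maps, by the
uniqueness in (T1), to the factorization through the Epi part of the (T1)-factorization of
`f`. If `[b''] < [b]`, partial monotonicity makes that Epi part non-invertible: otherwise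
the Mono part of `f` would go from an object isomorphic to `b` to one below `[b'']`. Hence
`E_≠(b) → (B_{<b})_{b/}` is an initial functor, and restricting the Kan cone along it gives
the Epi cone. The functor exists because targets of non-invertible Epis out of `b` lie
strictly below `b`: by (T2) Epis have dual-Epi sections and dual Epis have Epi retractions,
and a non-invertible Epi endomorphism of `b` with a section would have powers in infinitely
many isomorphism classes of `E(b)`. -/

lemma ObjLe.trans {T : DKTriple B} {a b c : B} (hab : ObjLe T a b) (hbc : ObjLe T b c) :
    ObjLe T a c :=
  let ⟨d, hd⟩ := hab
  let ⟨d', hd'⟩ := hbc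
  ⟨d ≫ d', T.Edual_comp hd hd'⟩

lemma ObjLe.of_isIso (T : DKTriple B) {a b : B} (f : a ⟶ b) [IsIso f] : ObjLe T a b :=
  ⟨f, T.Edual_iso f inferInstance⟩

namespace DKTriple

variable (T : DKTriple B)

lemma exists_Edual_section_of_E {b c : B} {e : b ⟶ c} (he : T.E e) :
    ∃ s : c ⟶ b, T.Edual s ∧ s ≫ e = 𝟙 c := by
  obtain ⟨n, -, cE, eR, cD, dR, -, hdR, hEcls, -, hdiag, -⟩ := T.t2 b
  obtain ⟨i, ⟨u, hu⟩, -⟩ := hEcls e he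
  refine ⟨u.hom ≫ inv (dR i ≫ eR i) ≫ dR i,
    T.Edual_comp (T.Edual_iso _ inferInstance)
      (T.Edual_comp (T.Edual_iso _ inferInstance) (hdR i)), ?_⟩
  obtain rfl : e = eR i ≫ u.inv := by simp [← hu]
  simp only [Category.assoc]
  rw [← Category.assoc (dR i), IsIso.inv_hom_id_assoc, Iso.hom_inv_id]

lemma exists_E_retraction_of_Edual {a b : B} {d : a ⟶ b} (hd : T.Edual d) :
    ∃ r : b ⟶ a, T.E r ∧ d ≫ r = 𝟙 a := by
  obtain ⟨n, -, cE, eR, cD, dR, heR, -, -, hDcls, hdiag, -⟩ := T.t2 b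
  obtain ⟨j, ⟨w, hw⟩, -⟩ := hDcls d hd
  refine ⟨eR j ≫ inv (dR j ≫ eR j) ≫ w.inv,
    T.E_comp (heR j) (T.E_iso _ inferInstance), ?_⟩
  rw [← hw]
  simp only [Category.assoc]
  rw [← Category.assoc (dR j), IsIso.hom_inv_id_assoc, Iso.hom_inv_id]

lemma exists_lt_epiEquiv_of_E {b c : B} (f : ℕ → (b ⟶ c)) (hf : ∀ p, T.E (f p)) :
    ∃ p q, p < q ∧ EpiEquiv (f p) (f q) := by
  obtain ⟨n, -, _, eR, _, _, -, -, hEcls, -⟩ := T.t2 b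
  choose cls hcls using fun p => (hEcls (f p) (hf p)).exists
  obtain ⟨p, q, hpq, hcls_eq⟩ := Finite.exists_ne_map_eq_of_infinite cls
  have hp := hcls p
  rw [hcls_eq] at hp
  obtain ⟨u, hu⟩ := hp
  obtain ⟨v, hv⟩ := hcls q
  rcases hpq.lt_or_gt with h | h
  · exact ⟨p, q, h, u ≪≫ v.symm, by simp [reassoc_of% hu, ← hv]⟩
  · exact ⟨q, p, h, v ≪≫ u.symm, by simp [reassoc_of% hv, ← hu]⟩

lemma E_pow {b : B} {ε : End b} (hε : T.E ε) (p : ℕ) : T.E (ε ^ p) := by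
  induction p with
  | zero => exact T.E_iso _ (inferInstanceAs (IsIso (𝟙 b)))
  | succ p ih => rw [pow_succ, End.mul_def]; exact T.E_comp hε ih

/-- The powers of `ε` fall into finitely many classes of `E(b)`, and `δ ^ p` splits `ε ^ p`,
so `ε ^ p ≅ ε ^ q` with `p < q` makes `ε ^ (q - p)` invertible. -/
lemma isIso_of_E_of_comp_eq_id {b : B} {ε δ : End b} (hε : T.E ε) (hδε : δ ≫ ε = 𝟙 b) :
    IsIso ε := by
  obtain ⟨p, q, hpq, w, hw⟩ := T.exists_lt_epiEquiv_of_E (ε ^ ·) (T.E_pow hε)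
  obtain ⟨k, rfl⟩ := Nat.exists_eq_add_of_lt hpq
  have hsplit : (δ ^ p) ≫ (ε ^ p) = 𝟙 b := pow_mul_pow_eq_one (M := End b) p hδε
  have hw' : w.hom = ε ^ (k + 1) := by
    calc w.hom = (δ ^ p) ≫ (ε ^ p) ≫ w.hom := by rw [reassoc_of% hsplit]
      _ = (δ ^ p) ≫ (ε ^ p) ≫ (ε ^ (k + 1)) := by
        rw [hw, show p + k + 1 = (k + 1) + p by omega, pow_add, End.mul_def]
      _ = ε ^ (k + 1) := by rw [reassoc_of% hsplit]
  have hunit : IsUnit (ε ^ (k + 1)) := (isUnit_iff_isIso _).2 (hw' ▸ inferInstance)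
  exact (isUnit_iff_isIso ε).1 ((isUnit_pow_iff k.succ_ne_zero).1 hunit)

lemma isIso_of_E_of_objLe {b c : B} {e : b ⟶ c} (he : T.E e) (h : ObjLe T b c) : IsIso e := by
  obtain ⟨d, hd⟩ := h
  obtain ⟨s, -, hs⟩ := T.exists_Edual_section_of_E he
  obtain ⟨r, hr, hdr⟩ := T.exists_E_retraction_of_Edual hd
  have : IsIso (e ≫ r) := T.isIso_of_E_of_comp_eq_id (δ := d ≫ s) (T.E_comp he hr)
    (by rw [Category.assoc, reassoc_of% hs, hdr])
  have : IsSplitMono e :=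
    IsSplitMono.mk' ⟨r ≫ inv (e ≫ r), by rw [← Category.assoc, IsIso.hom_inv_id]⟩
  have : IsSplitEpi e := IsSplitEpi.mk' ⟨s, hs⟩
  exact isIso_of_epi_of_isSplitMono e

lemma objLt_of_E_of_not_isIso {b c : B} {e : b ⟶ c} (he : T.E e) (hne : ¬ IsIso e) :
    ObjLt T c b := by
  obtain ⟨s, hs, -⟩ := T.exists_Edual_section_of_E he
  exact ⟨⟨s, hs⟩, fun h => hne (T.isIso_of_E_of_objLe he h)⟩

lemma not_isIso_e_of_objLt (hpm : PartiallyMonotone T) {b b'' : B} (h : ObjLt T b'' b)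
    {f : b ⟶ b''} (F : Fact T.E T.Edual f) : ¬ IsIso F.e := by
  intro hiso
  have hbZ : ObjLe T b F.Z := .of_isIso T F.e
  have hWb'' : ObjLe T F.W b'' := ⟨F.d, F.hd⟩
  exact hpm F.m F.hm.1
    ⟨hWb''.trans (h.1.trans hbZ), fun hZW => h.2 ((hbZ.trans hZW).trans hWb'')⟩

lemma exists_E_comp_eq_of_fact {X Y Z : B} {f : X ⟶ Y} (F : Fact T.E T.Edual f)
    {e : X ⟶ Z} (he : T.E e) {g : Z ⟶ Y} (hfac : e ≫ g = f) :
    ∃ u : Z ⟶ F.Z, T.E u ∧ e ≫ u = F.e ∧ u ≫ F.m ≫ F.d = g := by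
  obtain ⟨G⟩ := T.t1_exists g
  let F' : Fact T.E T.Edual f := ⟨G.Z, G.W, e ≫ G.e, G.m, G.d, T.E_comp he G.he, G.hm, G.hd,
    by rw [Category.assoc, G.fac, hfac]⟩
  obtain ⟨⟨i, j⟩, ⟨hi, hm, hd⟩, -⟩ := T.t1_unique F' F
  refine ⟨G.e ≫ i.hom, T.E_comp G.he (T.E_iso _ inferInstance),
    (Category.assoc _ _ _).symm.trans hi, ?_⟩
  rw [Category.assoc, reassoc_of% hm, hd]
  exact G.fac

def toBltUnder (b : B) : EpiNe T b ⥤ BltUnder T b where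
  obj x :=
    StructuredArrow.mk (Y := (⟨x.tgt, T.objLt_of_E_of_not_isIso x.he x.hni⟩ : Blt T b)) x.e
  map u := StructuredArrow.homMk (ObjectProperty.homMk u.1) u.2.2

lemma toBltUnder_initial (hpm : PartiallyMonotone T) (b : B) : (T.toBltUnder b).Initial where
  out d := by
    obtain ⟨F⟩ := T.t1_exists d.hom
    let x₀ : CostructuredArrow (T.toBltUnder b) d := CostructuredArrow.mk
      (Y := ⟨F.Z, F.e, F.he, T.not_isIso_e_of_objLt hpm d.right.property F⟩)
      (StructuredArrow.homMk (ObjectProperty.homMk (F.m ≫ F.d)) (by exact F.fac))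
    have hom_x₀ (x : CostructuredArrow (T.toBltUnder b) d) : Nonempty (x ⟶ x₀) := by
      obtain ⟨u, hu, hxu, hug⟩ :=
        T.exists_E_comp_eq_of_fact F x.left.he (g := x.hom.right.hom) (StructuredArrow.w x.hom)
      exact ⟨CostructuredArrow.homMk ⟨u, hu, hxu⟩ (by ext; exact hug)⟩
    have : Nonempty (CostructuredArrow (T.toBltUnder b) d) := ⟨x₀⟩
    exact zigzag_isConnected fun x y =>
      (Zigzag.of_hom (hom_x₀ x).some).trans (Zigzag.of_hom (hom_x₀ y).some).symm

end DKTriple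

/-- Proposition 7.0.7 (1): for a partially monotone DK-triple, a diagram
`X : B → C` is a pointwise right Kan extension at `b` of its restriction to
`B_{<b}` if and only if the canonical cone `X(b) → (E_≠(b) → C)` over the
non-invertible Epis out of `b` is a limit cone. -/
theorem pointwise_rke_iff_epi_cone_isLimit (T : DKTriple B)
    (hpm : PartiallyMonotone T) (X : B ⥤ C) (b : B) :
    Nonempty (Limits.IsLimit (kanCone T b X)) ↔
      Nonempty (Limits.IsLimit (epiCone T b X)) := by
  have := T.toBltUnder_initial hpm b
  -- `(kanCone T b X).whisker (T.toBltUnder b)` is `epiCone T b X` by unfolding.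
  exact (Functor.Initial.isLimitWhiskerEquiv (T.toBltUnder b) (kanCone T b X)).nonempty_congr.symm

end DK
end
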